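/- arXiv:1901.11434 — 9 statements merged into one kernel-verified Lean document; each statement's English description precedes it below -/
import Mathlib

section
/- Let f : ℝ^n → ℝ be a real-valued function of the form f(η) = Σ_{w ∈ {−1,0,1}^n} c_w e^{2πi w • η} for some coefficients c_w ∈ ℂ, let a, b ∈ ℝ^n, and define h : ℝ → ℝ by h(x) = f(x·a + b). Then there exist coefficients α_k ∈ ℂ, k ∈ K_a, such that h(x) = Σ_{k ∈ K_a} α_k e^{2πi k x} for all x ∈ ℝ; consequently, for every x_0 ∈ ℝ, the Fourier rank of h at x_0 is at most spread(a). -/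
open Complex Real

/-- The finite set `K_a = { w • a : w ∈ {-1,0,1}^n }` of "frequencies" of the vector `a`. -/
noncomputable def Ka {n : ℕ} (a : Fin n → ℝ) : Finset ℝ :=
  (Fintype.piFinset fun _ : Fin n => ({-1, 0, 1} : Finset ℝ)).image
    (fun w => ∑ j, w j * a j)

/-- The spread of `a`: `spread(a) = |K_a \ {0}| / 2`. -/
noncomputable def spread {n : ℕ} (a : Fin n → ℝ) : ℕ := ((Ka a).erase 0).card / 2

/-- The Fourier rank of `h : ℝ → ℝ` at `x₀`: the infimum of the numbers `r` such that for
some `ε > 0`, some set `K ⊂ ℝ \ {0}` with `|K| = 2r`, and some coefficients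
`α_k ∈ ℂ`, `h(x) = Σ_{k ∈ {0} ∪ K} α_k e^{2πi k x}` on `(x₀ - ε, x₀ + ε)`. -/
noncomputable def fourierRank (h : ℝ → ℝ) (x₀ : ℝ) : ℕ∞ :=
  sInf {m : ℕ∞ | ∃ r : ℕ, m = (r : ℕ∞) ∧ ∃ ε > (0 : ℝ), ∃ K : Finset ℝ,
    (0 : ℝ) ∉ K ∧ K.card = 2 * r ∧ ∃ α : ℝ → ℂ,
      ∀ x ∈ Set.Ioo (x₀ - ε) (x₀ + ε),
        (h x : ℂ) = ∑ k ∈ insert (0 : ℝ) K,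
          α k * Complex.exp (2 * Real.pi * Complex.I * k * x)}

lemma zero_mem_Ka {n : ℕ} (a : Fin n → ℝ) : (0 : ℝ) ∈ Ka a := by
  refine Finset.mem_image.mpr ⟨fun _ => 0, ?_, by simp⟩
  simp [Fintype.mem_piFinset]

lemma neg_mem_Ka {n : ℕ} (a : Fin n → ℝ) {k : ℝ} (hk : k ∈ Ka a) : -k ∈ Ka a := by
  obtain ⟨w, hw, rfl⟩ := Finset.mem_image.mp hk
  refine Finset.mem_image.mpr ⟨fun j => -(w j), ?_, ?_⟩
  · rw [Fintype.mem_piFinset]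
    intro j
    have := Fintype.mem_piFinset.mp hw j
    simp only [Finset.mem_insert, Finset.mem_singleton] at this ⊢
    rcases this with h | h | h <;> simp [h]
  · simp [Finset.sum_neg_distrib, neg_mul]

lemma even_card_erase_Ka {n : ℕ} (a : Fin n → ℝ) :
    ((Ka a).erase 0).card = 2 * spread a := by
  classical
  set S := (Ka a).erase 0 with hS
  have hsplit : (S.filter (fun k => 0 < k)).card + (S.filter (fun k => ¬ 0 < k)).card
      = S.card := Finset.card_filter_add_card_filter_not _
  have hbij : (S.filter (fun k => 0 < k)).card = (S.filter (fun k => ¬ 0 < k)).card := by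
    refine Finset.card_bij' (fun k _ => -k) (fun k _ => -k) ?_ ?_ ?_ ?_
    · intro k hk
      obtain ⟨hkS, hk0⟩ := Finset.mem_filter.mp hk
      refine Finset.mem_filter.mpr ⟨?_, by show ¬ (0:ℝ) < -k; push_neg; linarith⟩
      exact Finset.mem_erase.mpr ⟨by simpa using ne_of_gt hk0,
        neg_mem_Ka a (Finset.mem_of_mem_erase hkS)⟩
    · intro k hk
      obtain ⟨hkS, hk0⟩ := Finset.mem_filter.mp hk
      have hk0' : k ≠ 0 := (Finset.mem_erase.mp hkS).1
      have : k < 0 := lt_of_le_of_ne (not_lt.mp hk0) hk0'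
      refine Finset.mem_filter.mpr ⟨?_, by show (0:ℝ) < -k; linarith⟩
      exact Finset.mem_erase.mpr ⟨by simpa using hk0',
        neg_mem_Ka a (Finset.mem_of_mem_erase hkS)⟩
    · intro k _; ring
    · intro k _; ring
  have heven : 2 ∣ S.card := ⟨(S.filter (fun k => 0 < k)).card, by omega⟩
  simp only [spread, ← hS]
  omega

/-- if `f(η) = Σ_{w ∈ {-1,0,1}^n} c_w e^{2πi w • η}` is real-valued,
`a, b ∈ ℝⁿ`, and `h(x) = f(x·a + b)`, then `h(x) = Σ_{k ∈ K_a} α_k e^{2πi k x}` for some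
coefficients `α_k ∈ ℂ`; consequently, for every `x₀`, the Fourier rank of `h` at `x₀` is
at most `spread(a)`. -/
theorem fourierRank_le_spread (n : ℕ) (hn : 1 ≤ n)
    (f : (Fin n → ℝ) → ℝ) (c : (Fin n → ℝ) → ℂ)
    (hf : ∀ η : Fin n → ℝ, (f η : ℂ) =
      ∑ w ∈ Fintype.piFinset (fun _ : Fin n => ({-1, 0, 1} : Finset ℝ)),
        c w * Complex.exp (2 * Real.pi * Complex.I * (∑ j, w j * η j)))
    (a b : Fin n → ℝ) (h : ℝ → ℝ)
    (hh : ∀ x : ℝ, h x = f (fun j => x * a j + b j)) :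
    (∃ α : ℝ → ℂ, ∀ x : ℝ,
      (h x : ℂ) = ∑ k ∈ Ka a, α k * Complex.exp (2 * Real.pi * Complex.I * k * x)) ∧
    ∀ x₀ : ℝ, fourierRank h x₀ ≤ (spread a : ℕ∞) := by
  classical
  set T := Fintype.piFinset fun _ : Fin n => ({-1, 0, 1} : Finset ℝ) with hT
  set α : ℝ → ℂ := fun k => ∑ w ∈ T.filter (fun w => ∑ j, w j * a j = k),
      c w * Complex.exp (2 * Real.pi * Complex.I * (∑ j, w j * b j)) with hα
  have key : ∀ x : ℝ, (h x : ℂ) =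
      ∑ k ∈ Ka a, α k * Complex.exp (2 * Real.pi * Complex.I * k * x) := by
    intro x
    rw [hh, hf, Ka]
    rw [← Finset.sum_fiberwise_of_maps_to (g := fun w => ∑ j, w j * a j)
      (fun w hw => Finset.mem_image_of_mem (fun w => ∑ j, w j * a j) hw) (fun w => c w *
        Complex.exp (2 * Real.pi * Complex.I * (∑ j, w j * (x * a j + b j))))]
    refine Finset.sum_congr rfl fun k hk => ?_
    rw [hα, Finset.sum_mul]
    refine Finset.sum_congr rfl fun w hw => ?_
    have hwk : (∑ j, w j * a j) = k := (Finset.mem_filter.mp hw).2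
    have hreal : (∑ j, w j * (x * a j + b j))
        = (∑ j, w j * b j) + (∑ j, w j * a j) * x := by
      rw [Finset.sum_mul, ← Finset.sum_add_distrib]
      exact Finset.sum_congr rfl fun j _ => by ring
    rw [← hwk, mul_assoc (c w)]
    congr 1
    rw [← Complex.exp_add]
    congr 1
    rw [hreal]
    push_cast
    ring
  refine ⟨⟨α, key⟩, fun x₀ => ?_⟩
  apply sInf_le
  refine ⟨spread a, rfl, 1, one_pos, (Ka a).erase 0, Finset.notMem_erase 0 _,
    even_card_erase_Ka a, α, fun x _ => ?_⟩
  rw [Finset.insert_erase (zero_mem_Ka a)]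
  exact key x
end

section
/- Let h be a real-valued function defined in some neighborhood of a point x_0 ∈ ℝ, and suppose there are n ≥ 1, an expectation value function f : ℝ^n → ℝ with input redundancy n, vectors a, b ∈ ℝ^n, and ε > 0, such that h(x) = f(x·a + b) for all x ∈ (x_0 − ε, x_0 + ε). Then the Fourier rank r of h at x_0 satisfies 2r + 1 ≤ 3^n; equivalently, n ≥ log_3(2r + 1) ≥ log_3(r + 1). -/
open Complex Real

/-- if `h` coincides, on a neighborhood `(x₀ - ε, x₀ + ε)`, with
`x ↦ f(x·a + b)` for an expectation value function
`f(η) = Σ_{w ∈ {-1,0,1}^n} c_w e^{2πi w • η}` with input redundancy `n ≥ 1`, then the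
Fourier rank `r` of `h` at `x₀` is finite, satisfies `2r + 1 ≤ 3^n`, and equivalently
`n ≥ log₃(2r + 1) ≥ log₃(r + 1)`. -/
theorem input_redundancy_lower_bound_linear (h : ℝ → ℝ) (x₀ : ℝ)
    (n : ℕ) (hn : 1 ≤ n)
    (f : (Fin n → ℝ) → ℝ) (c : (Fin n → ℝ) → ℂ)
    (hf : ∀ η : Fin n → ℝ, (f η : ℂ) =
      ∑ w ∈ Fintype.piFinset (fun _ : Fin n => ({-1, 0, 1} : Finset ℝ)),
        c w * Complex.exp (2 * Real.pi * Complex.I * (∑ j, w j * η j)))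
    (a b : Fin n → ℝ) (ε : ℝ) (hε : 0 < ε)
    (hh : ∀ x ∈ Set.Ioo (x₀ - ε) (x₀ + ε), h x = f (fun j => x * a j + b j)) :
    ∃ r : ℕ, fourierRank h x₀ = (r : ℕ∞) ∧ 2 * r + 1 ≤ 3 ^ n ∧
      Real.logb 3 (r + 1) ≤ Real.logb 3 (2 * r + 1) ∧
      Real.logb 3 (2 * r + 1) ≤ (n : ℝ) := by
  classical
  set W := Fintype.piFinset (fun _ : Fin n => ({-1, 0, 1} : Finset ℝ)) with hWdef
  set S : Finset ℝ := W.image (fun w => ∑ j, w j * a j) with hSdef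
  set α : ℝ → ℂ := fun k =>
    ∑ w ∈ W.filter (fun w => (∑ j, w j * a j) = k),
      c w * Complex.exp (2 * Real.pi * Complex.I * (∑ j, w j * b j)) with hαdef
  -- key representation
  have key : ∀ x ∈ Set.Ioo (x₀ - ε) (x₀ + ε),
      (h x : ℂ) = ∑ k ∈ S, α k * Complex.exp (2 * Real.pi * Complex.I * k * x) := by
    intro x hx
    rw [hh x hx, hf]
    rw [hSdef]
    refine (Finset.sum_image'
      (fun w => c w * Complex.exp (2 * Real.pi * Complex.I *
        ((∑ j, w j * (x * a j + b j) : ℝ) : ℂ))) ?_).symm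
    intro w hw
    rw [hαdef]
    rw [Finset.sum_mul]
    refine Finset.sum_congr rfl ?_
    intro w' hw'
    have hww' : (∑ j, w' j * a j) = (∑ j, w j * a j) :=
      (Finset.mem_filter.mp hw').2
    have hsum : (∑ j, w' j * (x * a j + b j))
        = (∑ j, w' j * b j) + (∑ j, w' j * a j) * x := by
      rw [Finset.sum_mul, ← Finset.sum_add_distrib]
      exact Finset.sum_congr rfl fun j _ => by ring
    rw [mul_assoc, ← Complex.exp_add]
    congr 1
    rw [hsum, ← hww']
    push_cast
    ring
  -- 0 ∈ S
  have h0S : (0 : ℝ) ∈ S := by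
    rw [hSdef]
    refine Finset.mem_image.mpr ⟨fun _ => 0, ?_, by simp⟩
    rw [hWdef]
    refine Fintype.mem_piFinset.mpr fun j => by simp
  -- cardinality bound
  have hScard : S.card ≤ 3 ^ n := by
    calc S.card ≤ W.card := Finset.card_image_le
    _ = 3 ^ n := by
        rw [hWdef, Fintype.card_piFinset]
        have : ({-1, 0, 1} : Finset ℝ).card = 3 := by norm_num
        simp [this]
  set m := (S.erase 0).card with hmdef
  have hmS : m + 1 = S.card := Finset.card_erase_add_one h0S
  have hm3 : m + 1 ≤ 3 ^ n := hmS ▸ hScard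
  set r₀ := (m + 1) / 2 with hr₀def
  have hScard' : S.card ≤ 2 * r₀ + 1 := by omega
  obtain ⟨T, hST, hTcard⟩ := Infinite.exists_superset_card_eq S (2 * r₀ + 1) hScard'
  have h0T : (0 : ℝ) ∈ T := hST h0S
  set K := T.erase 0 with hKdef
  have hKcard : K.card = 2 * r₀ := by
    rw [hKdef]
    have := Finset.card_erase_add_one h0T
    omega
  have h0K : (0 : ℝ) ∉ K := Finset.notMem_erase _ _
  have hTins : insert (0 : ℝ) K = T := Finset.insert_erase h0T
  set α' : ℝ → ℂ := fun k => if k ∈ S then α k else 0 with hα'def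
  have hmem : (r₀ : ℕ∞) ∈ {mm : ℕ∞ | ∃ r : ℕ, mm = (r : ℕ∞) ∧ ∃ ε > (0 : ℝ),
      ∃ K : Finset ℝ, (0 : ℝ) ∉ K ∧ K.card = 2 * r ∧ ∃ α : ℝ → ℂ,
      ∀ x ∈ Set.Ioo (x₀ - ε) (x₀ + ε),
        (h x : ℂ) = ∑ k ∈ insert (0 : ℝ) K,
          α k * Complex.exp (2 * Real.pi * Complex.I * k * x)} := by
    refine ⟨r₀, rfl, ε, hε, K, h0K, hKcard, α', ?_⟩
    intro x hx
    rw [hTins]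
    have hsub : ∑ k ∈ T, α' k * Complex.exp (2 * Real.pi * Complex.I * k * x)
        = ∑ k ∈ S, α' k * Complex.exp (2 * Real.pi * Complex.I * k * x) := by
      refine (Finset.sum_subset hST ?_).symm
      intro k _ hkS
      rw [hα'def]
      simp [hkS]
    rw [hsub]
    rw [key x hx]
    refine Finset.sum_congr rfl fun k hk => ?_
    rw [hα'def]
    simp [hk]
  have hle : fourierRank h x₀ ≤ (r₀ : ℕ∞) := sInf_le hmem
  have hne : fourierRank h x₀ ≠ ⊤ := by
    intro htop
    rw [htop] at hle
    exact (ENat.coe_lt_top r₀).not_ge (top_le_iff.mp hle ▸ le_refl _)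
  set r := (fourierRank h x₀).toNat with hrdef
  have hr : fourierRank h x₀ = (r : ℕ∞) := (ENat.coe_toNat hne).symm
  have hrle : r ≤ r₀ := by
    rw [hr] at hle
    exact_mod_cast hle
  have hpow : 3 ^ n % 2 = 1 := by
    rw [Nat.pow_mod]
    norm_num
  have hbound : 2 * r + 1 ≤ 3 ^ n := by omega
  refine ⟨r, hr, hbound, ?_, ?_⟩
  · exact Real.logb_le_logb_of_le (by norm_num) (by positivity) (by push_cast; linarith)
  · rw [Real.logb_le_iff_le_rpow (by norm_num) (by positivity)]
    rw [Real.rpow_natCast]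
    exact_mod_cast hbound
end

section
/- Let n ≥ 1, let c ∈ ℝ with c ≠ 0, and let a ∈ ℝ^n be a vector all of whose entries satisfy a_j ∈ {c, −c} (i.e., all entries are equal up to sign). Then spread(a) = n. -/
lemma Ka_eq (n : ℕ) (c : ℝ) (hc : c ≠ 0) (a : Fin n → ℝ)
    (ha : ∀ j, a j = c ∨ a j = -c) :
    Ka a = (Finset.Icc (-(n:ℤ)) n).image (fun k : ℤ => (k : ℝ) * c) := by
  ext x
  simp only [Ka, Finset.mem_image, Fintype.mem_piFinset, Finset.mem_insert,
    Finset.mem_singleton, Finset.mem_Icc]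
  constructor
  · rintro ⟨w, hw, rfl⟩
    set t : Fin n → ℤ := fun j => if w j * a j = c then 1 else if w j * a j = -c then -1 else 0
      with ht
    have hwa : ∀ j, w j * a j = (t j : ℝ) * c := by
      intro j
      have h2c : ¬ (-c = c) := by intro h; apply hc; linarith
      have h0c : ¬ ((0:ℝ) = c) := fun h => hc h.symm
      have h0c' : ¬ ((0:ℝ) = -c) := by intro h; apply hc; linarith
      rcases ha j with h | h <;> rcases hw j with h1 | h1 | h1 <;>
        simp [ht, h, h1, hc, h2c, h0c, h0c', neg_neg]
    refine ⟨∑ j, t j, ⟨?_, ?_⟩, ?_⟩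
    · have : -(n:ℤ) = ∑ _j : Fin n, (-1 : ℤ) := by simp
      rw [this]
      apply Finset.sum_le_sum
      intro j _
      simp only [ht]
      split_ifs <;> omega
    · have : (n:ℤ) = ∑ _j : Fin n, (1 : ℤ) := by simp
      rw [this]
      apply Finset.sum_le_sum
      intro j _
      simp only [ht]
      split_ifs <;> omega
    · push_cast
      rw [Finset.sum_mul]
      exact Finset.sum_congr rfl fun j _ => (hwa j).symm
  · rintro ⟨k, ⟨hk1, hk2⟩, rfl⟩
    refine ⟨fun j => if (j : ℕ) < k.natAbs then (if a j = c then (k.sign : ℝ) else -(k.sign : ℝ)) else 0, ?_, ?_⟩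
    · intro j
      have h3 : k.sign = -1 ∨ k.sign = 0 ∨ k.sign = 1 := by
        rcases lt_trichotomy k 0 with h | h | h
        · exact Or.inl (Int.sign_eq_neg_one_of_neg h)
        · subst h; simp
        · exact Or.inr (Or.inr (Int.sign_eq_one_of_pos h))
      rcases h3 with h | h | h <;> rw [h] <;> dsimp only <;> split_ifs <;> norm_num
    · have hterm : ∀ j : Fin n, (if (j : ℕ) < k.natAbs then (if a j = c then (k.sign : ℝ) else -(k.sign : ℝ)) else 0) * a j
        = if (j : ℕ) < k.natAbs then (k.sign : ℝ) * c else 0 := by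
        intro j
        rcases ha j with h | h
        · simp only [h, if_pos rfl]
          split_ifs <;> ring
        · have hne : a j ≠ c := by rw [h]; intro hcc; apply hc; linarith
          simp only [if_neg hne, h]
          split_ifs <;> first | ring1 | (exfalso; apply hc; linarith)
      rw [Finset.sum_congr rfl fun j _ => hterm j]
      rw [Fin.sum_univ_eq_sum_range (fun i => if i < k.natAbs then (k.sign : ℝ) * c else 0)]
      have hle : k.natAbs ≤ n := by omega
      rw [← Finset.sum_range_add_sum_Ico _ hle]
      have h1 : ∑ i ∈ Finset.range k.natAbs, (if i < k.natAbs then (k.sign : ℝ) * c else 0)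
          = (k.natAbs : ℝ) * ((k.sign : ℝ) * c) := by
        rw [Finset.sum_ite_of_true, Finset.sum_const, Finset.card_range, nsmul_eq_mul]
        intro i hi; exact Finset.mem_range.mp hi
      have h2 : ∑ i ∈ Finset.Ico k.natAbs n, (if i < k.natAbs then (k.sign : ℝ) * c else 0) = 0 := by
        apply Finset.sum_eq_zero
        intro i hi
        have := (Finset.mem_Ico.mp hi).1
        simp [Nat.not_lt.mpr this]
      rw [h1, h2, add_zero]
      have : ((k.natAbs : ℝ)) * (k.sign : ℝ) = (k : ℝ) := by
        rw [← Int.cast_natCast, ← Int.cast_mul]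
        norm_cast
        rw [mul_comm]
        exact Int.sign_mul_abs k
      rw [← mul_assoc, this]

/-- if `n ≥ 1`, `c ≠ 0`, and every entry of `a ∈ ℝⁿ` equals `c` or `-c`
(all entries equal up to sign), then `spread(a) = n` (indeed `|K_a \ {0}| = 2n`). -/
theorem spread_of_equal_up_to_sign (n : ℕ) (hn : 1 ≤ n) (c : ℝ) (hc : c ≠ 0)
    (a : Fin n → ℝ) (ha : ∀ j, a j = c ∨ a j = -c) :
    ((Ka a).erase 0).card = 2 * n ∧ spread a = n := by
  have hKa := Ka_eq n c hc a ha
  have hinj : Set.InjOn (fun k : ℤ => (k : ℝ) * c) (Finset.Icc (-(n:ℤ)) n) := by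
    intro x _ y _ h
    have : (x : ℝ) = y := mul_right_cancel₀ hc h
    exact_mod_cast this
  have hcard : (Ka a).card = 2 * n + 1 := by
    rw [hKa, Finset.card_image_of_injOn hinj, Int.card_Icc]
    simp
    omega
  have h0 : (0 : ℝ) ∈ Ka a := by
    rw [hKa]
    refine Finset.mem_image.mpr ⟨0, ?_, by simp⟩
    simp
  have hmain : ((Ka a).erase 0).card = 2 * n := by
    rw [Finset.card_erase_of_mem h0, hcard]
    omega
  exact ⟨hmain, by simp [spread, hmain]⟩
end

section
/- Let D_1, ..., D_n be finite subsets of ℝ, let f : ℝ^n → ℝ be a real-valued function of the form f(η) = Σ_{w ∈ D_1 × ⋯ × D_n} c_w e^{2πi w • η} for coefficients c_w ∈ ℂ, let a, b ∈ ℝ^n, and define h(x) = f(x·a + b). Then, with K_a := { w • a : w ∈ D_1 × ⋯ × D_n }, there exist coefficients α_k ∈ ℂ, k ∈ K_a, such that h(x) = Σ_{k ∈ K_a} α_k e^{2πi k x} for all x ∈ ℝ; consequently the Fourier rank of h at every point x_0 ∈ ℝ is at most |K_a \ {0}| / 2. -/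
open Complex Real

/-- The character `x ↦ e^{2πikx}` as a monoid hom from `Multiplicative ℝ`. -/
noncomputable def expChar (k : ℝ) : Multiplicative ℝ →* ℂ where
  toFun x := Complex.exp (2 * Real.pi * Complex.I * k * (Multiplicative.toAdd x : ℝ))
  map_one' := by simp
  map_mul' x y := by
    simp only [toAdd_mul, ← Complex.exp_add]
    push_cast
    ring_nf

lemma expChar_injective : Function.Injective expChar := by
  intro k k' hkk'
  by_contra hne
  have hd : k - k' ≠ 0 := sub_ne_zero.mpr hne
  have := DFunLike.congr_fun hkk' (Multiplicative.ofAdd (1 / (2 * (k - k'))))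
  simp only [expChar, MonoidHom.coe_mk, OneHom.coe_mk, toAdd_ofAdd] at this
  have h2 : Complex.exp (2 * Real.pi * Complex.I * k * ((1 / (2 * (k - k')) : ℝ) : ℂ) -
      2 * Real.pi * Complex.I * k' * ((1 / (2 * (k - k')) : ℝ) : ℂ)) = 1 := by
    rw [Complex.exp_sub, this, div_self (Complex.exp_ne_zero _)]
  have h3 : (2 * Real.pi * Complex.I * k * ((1 / (2 * (k - k')) : ℝ) : ℂ) -
      2 * Real.pi * Complex.I * k' * ((1 / (2 * (k - k')) : ℝ) : ℂ)) = Real.pi * Complex.I := by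
    have : ((k : ℂ) - k') ≠ 0 := by exact_mod_cast sub_ne_zero.mpr hne
    push_cast
    field_simp
  rw [h3, Complex.exp_pi_mul_I] at h2
  norm_num at h2

lemma coeff_unique (S : Finset ℝ) (γ : ℝ → ℂ)
    (hz : ∀ x : ℝ, ∑ k ∈ S, γ k * Complex.exp (2 * Real.pi * Complex.I * k * x) = 0) :
    ∀ k ∈ S, γ k = 0 := by
  have hli : LinearIndependent ℂ (fun k : ℝ => ⇑(expChar k)) :=
    (linearIndependent_monoidHom (Multiplicative ℝ) ℂ).comp expChar expChar_injective
  refine linearIndependent_iff'.mp hli S γ ?_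
  funext x
  have := hz (Multiplicative.toAdd x)
  simpa [expChar, Finset.sum_apply, smul_eq_mul] using this

lemma even_card_of_neg_closed : ∀ (T : Finset ℝ), (0:ℝ) ∉ T → (∀ k ∈ T, -k ∈ T) → Even T.card := by
  intro T
  induction T using Finset.strongInduction with
  | _ T ih =>
    intro h0 hs
    rcases T.eq_empty_or_nonempty with rfl | ⟨k, hk⟩
    · simp
    · have hk0 : k ≠ 0 := fun e => h0 (e ▸ hk)
      have hnk : -k ∈ T := hs k hk
      have hne : -k ≠ k := by intro e; apply hk0; linarith [neg_eq_iff_eq_neg.mp e]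
      set T' := (T.erase k).erase (-k) with hT'
      have hmem : -k ∈ T.erase k := Finset.mem_erase.mpr ⟨hne, hnk⟩
      have hsub : T' ⊂ T :=
        (Finset.erase_ssubset hmem).trans_subset (Finset.erase_subset _ _)
      have h0' : (0:ℝ) ∉ T' := fun hx => h0 (Finset.mem_of_mem_erase (Finset.mem_of_mem_erase hx))
      have hs' : ∀ m ∈ T', -m ∈ T' := by
        intro m hm
        have hm1 := Finset.mem_erase.mp hm
        have hm2 := Finset.mem_erase.mp hm1.2
        refine Finset.mem_erase.mpr ⟨?_, Finset.mem_erase.mpr ⟨?_, hs m hm2.2⟩⟩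
        · intro e; exact hm2.1 (by linarith [e])
        · intro e; exact hm1.1 (by linarith [e])
      obtain ⟨m, hm⟩ := ih T' hsub h0' hs'
      have h1 : (T.erase k).card + 1 = T.card := Finset.card_erase_add_one hk
      have h2 : T'.card + 1 = (T.erase k).card := Finset.card_erase_add_one hmem
      exact ⟨m + 1, by omega⟩

lemma conj_term (γ : ℂ) (k x : ℝ) :
    (starRingEnd ℂ) (γ * Complex.exp (2 * Real.pi * Complex.I * k * x)) =
      (starRingEnd ℂ) γ * Complex.exp (2 * Real.pi * Complex.I * (-k : ℝ) * x) := by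
  rw [map_mul, ← Complex.exp_conj]
  congr 1
  simp only [map_mul, map_ofNat, Complex.conj_I, Complex.conj_ofReal]
  push_cast
  ring

/-- generalization of the spread bound to arbitrary finite frequency sets
`D₁, …, Dₙ ⊂ ℝ`. If `f(η) = Σ_{w ∈ D₁ × ⋯ × Dₙ} c_w e^{2πi w • η}` is real-valued,
`a, b ∈ ℝⁿ`, and `h(x) = f(x·a + b)`, then with
`K_a = { w • a : w ∈ D₁ × ⋯ × Dₙ }` there are coefficients `α_k ∈ ℂ` with
`h(x) = Σ_{k ∈ K_a} α_k e^{2πi k x}` for all `x`; consequently the Fourier rank of `h`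
at every point is at most `|K_a \ {0}| / 2`. -/
theorem fourierRank_le_general_spectrum (n : ℕ) (hn : 1 ≤ n)
    (D : Fin n → Finset ℝ)
    (f : (Fin n → ℝ) → ℝ) (c : (Fin n → ℝ) → ℂ)
    (hf : ∀ η : Fin n → ℝ, (f η : ℂ) =
      ∑ w ∈ Fintype.piFinset D,
        c w * Complex.exp (2 * Real.pi * Complex.I * (∑ j, w j * η j)))
    (a b : Fin n → ℝ) (h : ℝ → ℝ)
    (hh : ∀ x : ℝ, h x = f (fun j => x * a j + b j)) :
    (∃ α : ℝ → ℂ, ∀ x : ℝ,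
      (h x : ℂ) = ∑ k ∈ (Fintype.piFinset D).image (fun w => ∑ j, w j * a j),
        α k * Complex.exp (2 * Real.pi * Complex.I * k * x)) ∧
    ∀ x₀ : ℝ, fourierRank h x₀ ≤
      ((((Fintype.piFinset D).image (fun w => ∑ j, w j * a j)).erase 0).card / 2 : ℕ) := by
  classical
  set g : (Fin n → ℝ) → ℝ := fun w => ∑ j, w j * a j with hg
  set F : Finset ℝ := (Fintype.piFinset D).image g with hF
  set α : ℝ → ℂ := fun k =>
    ∑ w ∈ (Fintype.piFinset D).filter (fun w => g w = k),
      c w * Complex.exp (2 * Real.pi * Complex.I * (∑ j, w j * b j)) with hα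
  have hα0 : ∀ k, k ∉ F → α k = 0 := by
    intro k hk
    have hempty : (Fintype.piFinset D).filter (fun w => g w = k) = ∅ := by
      refine Finset.filter_eq_empty_iff.mpr ?_
      intro w hw hwk
      exact hk (hF ▸ hwk ▸ Finset.mem_image_of_mem g hw)
    simp only [hα, hempty, Finset.sum_empty]
  have hrep : ∀ x : ℝ, (h x : ℂ) =
      ∑ k ∈ F, α k * Complex.exp (2 * Real.pi * Complex.I * k * x) := by
    intro x
    rw [hh, hf]
    have hterm : ∀ k ∈ F, α k * Complex.exp (2 * Real.pi * Complex.I * k * x)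
        = ∑ w ∈ (Fintype.piFinset D).filter (fun w => g w = k),
            c w * Complex.exp (2 * Real.pi * Complex.I * (∑ j, w j * (x * a j + b j))) := by
      intro k _
      rw [hα, Finset.sum_mul]
      refine Finset.sum_congr rfl ?_
      intro w hw
      have hwk : g w = k := (Finset.mem_filter.mp hw).2
      rw [mul_assoc, ← Complex.exp_add]
      congr 1
      rw [← hwk, hg]
      push_cast
      rw [show (∑ j, (w j:ℂ) * ((x:ℂ) * (a j:ℂ) + (b j:ℂ)))
          = (x:ℂ) * ∑ j, (w j:ℂ) * (a j:ℂ) + ∑ j, (w j:ℂ) * (b j:ℂ) by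
        rw [Finset.mul_sum, ← Finset.sum_add_distrib]
        exact Finset.sum_congr rfl fun j _ => by ring]
      ring
    rw [Finset.sum_congr rfl hterm, hF]
    exact (Finset.sum_fiberwise_of_maps_to (fun w hw => Finset.mem_image_of_mem g hw) _).symm
  have hconj : ∀ x : ℝ, (h x : ℂ) =
      ∑ k ∈ F.image (fun k => -k),
        (starRingEnd ℂ) (α (-k)) * Complex.exp (2 * Real.pi * Complex.I * k * x) := by
    intro x
    have h1 := congrArg (starRingEnd ℂ) (hrep x)
    rw [Complex.conj_ofReal, map_sum] at h1
    rw [Finset.sum_image (fun p _ q _ e => by linarith [e] : ∀ p ∈ F, ∀ q ∈ F, -p = -q → p = q)]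
    rw [h1]
    refine Finset.sum_congr rfl fun k _ => ?_
    rw [conj_term]
    simp [neg_neg]
  set S : Finset ℝ := F ∪ F.image (fun k => -k) with hS
  have hz : ∀ x : ℝ, ∑ k ∈ S, (α k - (starRingEnd ℂ) (α (-k))) *
      Complex.exp (2 * Real.pi * Complex.I * k * x) = 0 := by
    intro x
    have e1 : ∑ k ∈ F, α k * Complex.exp (2 * Real.pi * Complex.I * k * x)
        = ∑ k ∈ S, α k * Complex.exp (2 * Real.pi * Complex.I * k * x) :=
      Finset.sum_subset Finset.subset_union_left (fun k _ hk => by rw [hα0 k hk, zero_mul])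
    have e2 : ∑ k ∈ F.image (fun k => -k),
          (starRingEnd ℂ) (α (-k)) * Complex.exp (2 * Real.pi * Complex.I * k * x)
        = ∑ k ∈ S, (starRingEnd ℂ) (α (-k)) * Complex.exp (2 * Real.pi * Complex.I * k * x) :=
      Finset.sum_subset Finset.subset_union_right (fun k _ hk => by
        have hnm : -k ∉ F := fun hm => hk (by
          simpa using Finset.mem_image_of_mem (fun k => -k) hm)
        rw [hα0 _ hnm, map_zero, zero_mul])
    simp only [sub_mul]
    rw [Finset.sum_sub_distrib, ← e1, ← e2, ← hrep x, ← hconj x, sub_self]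
  have hsymm : ∀ k : ℝ, (starRingEnd ℂ) (α k) = α (-k) := by
    intro k
    by_cases hk : k ∈ S
    · have h0 := coeff_unique S _ hz k hk
      have : α k = (starRingEnd ℂ) (α (-k)) := sub_eq_zero.mp h0
      rw [this, Complex.conj_conj]
    · have hkF : k ∉ F := fun hm => hk (Finset.mem_union_left _ hm)
      have hknF : -k ∉ F := fun hm => hk (Finset.mem_union_right _ (by
        simpa using Finset.mem_image_of_mem (fun k => -k) hm))
      rw [hα0 k hkF, hα0 _ hknF, map_zero]
  set T : Finset ℝ := (F.erase 0).filter (fun k => α k ≠ 0) with hT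
  have hT0 : (0:ℝ) ∉ T := by
    intro h0
    exact (Finset.mem_erase.mp (Finset.mem_filter.mp h0).1).1 rfl
  have hTneg : ∀ k ∈ T, -k ∈ T := by
    intro k hk
    obtain ⟨hke, hkne⟩ := Finset.mem_filter.mp hk
    obtain ⟨hk0, _⟩ := Finset.mem_erase.mp hke
    have hne' : α (-k) ≠ 0 := by
      rw [← hsymm k]
      simpa using hkne
    have hmF : -k ∈ F := by
      by_contra hm
      exact hne' (hα0 _ hm)
    exact Finset.mem_filter.mpr ⟨Finset.mem_erase.mpr ⟨neg_ne_zero.mpr hk0, hmF⟩, hne'⟩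
  obtain ⟨r, hr⟩ := even_card_of_neg_closed T hT0 hTneg
  have hsum2 : ∀ x : ℝ, ∑ k ∈ F, α k * Complex.exp (2 * Real.pi * Complex.I * k * x)
      = ∑ k ∈ insert (0:ℝ) T, α k * Complex.exp (2 * Real.pi * Complex.I * k * x) := by
    intro x
    have e1 : ∑ k ∈ F, α k * Complex.exp (2 * Real.pi * Complex.I * k * x)
        = ∑ k ∈ F ∪ insert (0:ℝ) T, α k * Complex.exp (2 * Real.pi * Complex.I * k * x) :=
      Finset.sum_subset Finset.subset_union_left (fun k _ hk => by rw [hα0 k hk, zero_mul])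
    have e2 : ∑ k ∈ insert (0:ℝ) T, α k * Complex.exp (2 * Real.pi * Complex.I * k * x)
        = ∑ k ∈ F ∪ insert (0:ℝ) T, α k * Complex.exp (2 * Real.pi * Complex.I * k * x) :=
      Finset.sum_subset Finset.subset_union_right (fun k hkU hk => by
        have hkF : k ∈ F := by
          rcases Finset.mem_union.mp hkU with h1 | h1
          · exact h1
          · exact absurd h1 hk
        have hk0 : k ≠ 0 := fun e => hk (e ▸ Finset.mem_insert_self 0 T)
        have hkT : k ∉ T := fun e => hk (Finset.mem_insert_of_mem e)
        have : α k = 0 := by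
          by_contra hne
          exact hkT (Finset.mem_filter.mpr ⟨Finset.mem_erase.mpr ⟨hk0, hkF⟩, hne⟩)
        rw [this, zero_mul])
    rw [e1, e2]
  refine ⟨⟨α, hrep⟩, ?_⟩
  intro x₀
  have hmem : ((r : ℕ∞)) ∈ {m : ℕ∞ | ∃ r : ℕ, m = (r : ℕ∞) ∧ ∃ ε > (0 : ℝ), ∃ K : Finset ℝ,
      (0 : ℝ) ∉ K ∧ K.card = 2 * r ∧ ∃ α : ℝ → ℂ,
      ∀ x ∈ Set.Ioo (x₀ - ε) (x₀ + ε),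
        (h x : ℂ) = ∑ k ∈ insert (0 : ℝ) K,
          α k * Complex.exp (2 * Real.pi * Complex.I * k * x)} :=
    ⟨r, rfl, 1, one_pos, T, hT0, by omega, α, fun x _ => (hrep x).trans (hsum2 x)⟩
  refine le_trans (sInf_le hmem) ?_
  have hle : r ≤ (F.erase 0).card / 2 := by
    have hcard : T.card ≤ (F.erase 0).card :=
      Finset.card_le_card (hT ▸ Finset.filter_subset (fun k => α k ≠ 0) (F.erase 0))
    omega
  exact_mod_cast hle
end

section
/- Let f : ℝ^n → ℝ be a function of the form f(η) = Σ_{w ∈ {−1,0,1}^n} c_w e^{2πi w • η} with c_w ∈ ℂ. Then for every j ∈ {1, ..., n} and every η ∈ ℝ^n, the partial derivative of f with respect to η_j satisfies the parameter-shift rule ∂_{η_j} f(η) = π ( f(η + (1/4) e_j) − f(η − (1/4) e_j) ), where e_j is the j-th standard basis vector of ℝ^n. -/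
/-!
Along the coordinate line through `η` in direction `e_j`, every term of `f` is a constant times
`t ↦ exp (2πi (a + k t))` with frequency `k ∈ {-1, 0, 1}`. Shifting `t` by `±1/4` multiplies such
a term by `exp (±πik/2)`, and `π (exp (πik/2) - exp (-πik/2)) = 2πik` precisely because
`sin (πk/2) = k` for these three frequencies; so the shift difference is the derivative. The rule
is linear in the function, so it passes to the sum and then to its real part `f`.
-/

open Complex Real

def HasParameterShiftAt {E : Type*} [NormedAddCommGroup E] [NormedSpace ℝ E]
    (g : ℝ → E) (t : ℝ) : Prop :=
  HasDerivAt g (π • (g (t + 1 / 4) - g (t - 1 / 4))) t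

namespace HasParameterShiftAt

variable {E F : Type*} [NormedAddCommGroup E] [NormedSpace ℝ E]
  [NormedAddCommGroup F] [NormedSpace ℝ F] {t : ℝ}

theorem sum {ι : Type*} {u : Finset ι} {g : ι → ℝ → E}
    (h : ∀ i ∈ u, HasParameterShiftAt (g i) t) :
    HasParameterShiftAt (fun s => ∑ i ∈ u, g i s) t := by
  unfold HasParameterShiftAt
  rw [← Finset.sum_sub_distrib, Finset.smul_sum]
  exact HasDerivAt.fun_sum h

theorem const_smul {R : Type*} [Monoid R] [DistribMulAction R E] [SMulCommClass ℝ R E]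
    [ContinuousConstSMul R E] {g : ℝ → E} (h : HasParameterShiftAt g t) (c : R) :
    HasParameterShiftAt (c • g) t := by
  refine (HasDerivAt.const_smul c h).congr_deriv ?_
  rw [Pi.smul_apply, Pi.smul_apply, ← smul_sub]
  exact (smul_comm π c _).symm

theorem continuousLinearMap_comp {g : ℝ → E} (h : HasParameterShiftAt g t) (L : E →L[ℝ] F) :
    HasParameterShiftAt (L ∘ g) t := by
  unfold HasParameterShiftAt
  simpa only [Function.comp_apply, map_smul, map_sub] using L.hasFDerivAt.comp_hasDerivAt t h

end HasParameterShiftAt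

theorem exp_pi_div_two_mul_I_sub_exp_neg {k : ℝ} (hk : k ∈ ({-1, 0, 1} : Finset ℝ)) :
    cexp (π / 2 * k * I) - cexp (-(π / 2 * k * I)) = 2 * k * I := by
  simp only [Finset.mem_insert, Finset.mem_singleton] at hk
  rcases hk with rfl | rfl | rfl <;>
    simp [Complex.exp_neg, exp_pi_div_two_mul_I] <;> ring

theorem hasParameterShiftAt_cexp {k : ℝ} (hk : k ∈ ({-1, 0, 1} : Finset ℝ)) (a t : ℝ) :
    HasParameterShiftAt (fun s : ℝ => cexp (2 * π * I * ↑(a + k * s))) t := by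
  have hderiv : HasDerivAt (fun s : ℝ => cexp (2 * π * I * ↑(a + k * s)))
      (cexp (2 * π * I * ↑(a + k * t)) * (2 * π * I * k)) t := by
    have := ((((hasDerivAt_id t).const_mul k).const_add a).ofReal_comp.const_mul
      (2 * π * I)).cexp
    simpa using this
  refine hderiv.congr_deriv ?_
  dsimp only
  have hplus : 2 * π * I * ↑(a + k * (t + 1 / 4))
      = 2 * π * I * ↑(a + k * t) + π / 2 * k * I := by push_cast; ring
  have hminus : 2 * π * I * ↑(a + k * (t - 1 / 4))
      = 2 * π * I * ↑(a + k * t) + -(π / 2 * k * I) := by push_cast; ring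
  rw [hplus, hminus, Complex.exp_add, Complex.exp_add, ← mul_sub,
    exp_pi_div_two_mul_I_sub_exp_neg hk, Complex.real_smul]
  ring

theorem dotProduct_update {n : Type*} [Fintype n] [DecidableEq n] (w η : n → ℝ) (j : n)
    (t : ℝ) : w ⬝ᵥ Function.update η j t = (w ⬝ᵥ η - w j * η j) + w j * t := by
  rw [Pi.update_eq_sub_add_single, dotProduct_add, dotProduct_sub, dotProduct_single,
    dotProduct_single]

theorem update_add_eq_add_smul_single {n : Type*} [DecidableEq n] (η : n → ℝ) (j : n)
    (s : ℝ) : Function.update η j (η j + s) = η + s • Pi.single j 1 := by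
  rw [Pi.update_eq_sub_add_single, Pi.single_add, ← Pi.single_smul', smul_eq_mul, mul_one]
  abel

/-- every expectation value function
`f(η) = Σ_{w ∈ {-1,0,1}^n} c_w e^{2πi w • η}` satisfies the parameter-shift rule
`∂_{η_j} f(η) = π (f(η + (1/4)e_j) - f(η - (1/4)e_j))`. -/
theorem parameter_shift_rule (n : ℕ)
    (f : (Fin n → ℝ) → ℝ) (c : (Fin n → ℝ) → ℂ)
    (hf : ∀ η : Fin n → ℝ, (f η : ℂ) =
      ∑ w ∈ Fintype.piFinset (fun _ : Fin n => ({-1, 0, 1} : Finset ℝ)),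
        c w * Complex.exp (2 * Real.pi * Complex.I * (∑ j, w j * η j)))
    (j : Fin n) (η : Fin n → ℝ) :
    HasDerivAt (fun t : ℝ => f (Function.update η j t))
      (Real.pi * (f (η + (1/4 : ℝ) • (Pi.single j 1 : Fin n → ℝ)) - f (η - (1/4 : ℝ) • (Pi.single j 1 : Fin n → ℝ))))
      (η j) := by
  set S := Fintype.piFinset (fun _ : Fin n => ({-1, 0, 1} : Finset ℝ))
  have hline : (fun t : ℝ => f (Function.update η j t)) = Complex.reCLM ∘ fun t =>
      ∑ w ∈ S, c w • cexp (2 * π * I * ↑((w ⬝ᵥ η - w j * η j) + w j * t)) := by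
    funext t
    simp only [Function.comp_apply, Complex.reCLM_apply, smul_eq_mul, ← dotProduct_update]
    rw [← ofReal_re (f _), hf]
    rfl
  have hshift : HasParameterShiftAt (fun t : ℝ => f (Function.update η j t)) (η j) := by
    rw [hline]
    refine (HasParameterShiftAt.sum fun w hw => ?_).continuousLinearMap_comp _
    exact (hasParameterShiftAt_cexp (Fintype.mem_piFinset.1 hw j) _ _).const_smul (c w)
  rwa [HasParameterShiftAt, update_add_eq_add_smul_single, sub_eq_add_neg (η j),
    update_add_eq_add_smul_single, neg_smul, ← sub_eq_add_neg] at hshift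
end

section
/- Let μ_1, ..., μ_m be sc-monomials of degrees at most d, suppose the intersection I := I_{μ_1} ∩ ⋯ ∩ I_{μ_m} of their intervals of definition is a nonempty open interval, and let g : I → ℝ be defined by g = Σ_{j=1}^m α_j μ_j for real coefficients α_1, ..., α_m. If there exists a real-analytic function g̃ : ℝ → ℝ whose restriction to I equals g, then g̃ is a polynomial of degree at most d. -/
/-!
Write `μⱼ = Pⱼ · √Rⱼ`, where `Rⱼ` is the product of the radicands of `μⱼ`; it splits over `ℝ`
and `2 deg Pⱼ + deg Rⱼ ≤ 2d`. Suppose `g̃ = ∑ Pⱼ √Rⱼ` near a point `c` with all `Rⱼ(c) > 0`.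
If some `Rⱼ` is not constant, let `x₀` be the root of the `Rⱼ` closest to `c`. By the identity
theorem `g̃ = ∑ Pⱼ √Rⱼ` on the ball about `c` reaching `x₀`. Write `Rⱼ = ℓ^kⱼ Tⱼ` with `ℓ` linear,
positive on the ball and vanishing at `x₀`, and `Tⱼ(x₀) > 0`; splitting by the parity of `kⱼ`
gives `g̃ = E + F √ℓ` on the ball with `E`, `F` analytic at `x₀`. As `(g̃ - E)² = F² ℓ` would have
even order on the left and odd order on the right, `g̃ = E` near `x₀`. Now `E` has the same shape
with radicands `Tⱼ` of smaller total degree, so we may induct; once all radicands are constant,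
`g̃` is a polynomial of degree at most `d` near a point, hence everywhere.
-/

open Polynomial Set Filter Topology Metric

theorem Real.analyticAt_sqrt {x : ℝ} (hx : 0 < x) : AnalyticAt ℝ (√·) x := by
  have : AnalyticAt ℝ (fun y => Real.exp (Real.log y / 2)) x :=
    analyticAt_rexp.comp ((analyticAt_log hx).div_const)
  refine this.congr ?_
  filter_upwards [eventually_gt_nhds hx] with y hy
  rw [Real.sqrt_eq_rpow, Real.rpow_def_of_pos hy, div_eq_mul_one_div]

theorem Polynomial.analyticAt_eval (Q : ℝ[X]) (x : ℝ) : AnalyticAt ℝ (fun y => Q.eval y) x := by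
  simpa using (analyticAt_id (𝕜 := ℝ) (E := ℝ)).aeval_polynomial (z := x) Q

theorem AnalyticAt.eventually_eq_zero_of_sq_eq_sq_mul {𝕜 : Type*} [NontriviallyNormedField 𝕜]
    {f F : 𝕜 → 𝕜} {x₀ a : 𝕜} (hf : AnalyticAt 𝕜 f x₀) (hF : AnalyticAt 𝕜 F x₀) (ha : a ≠ 0)
    (h : ∃ᶠ x in 𝓝[≠] x₀, f x ^ 2 = F x ^ 2 * (a * (x - x₀))) : ∀ᶠ x in 𝓝 x₀, f x = 0 := by
  have hlin : AnalyticAt 𝕜 (fun x => a * (x - x₀)) x₀ := by fun_prop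
  have hsq : (fun x => f x ^ 2) =ᶠ[𝓝 x₀] fun x => F x ^ 2 * (a * (x - x₀)) := by
    have := ((hf.pow 2).sub ((hF.pow 2).mul hlin)).frequently_zero_iff_eventually_zero.1
      (h.mono fun x hx => by simp [hx])
    filter_upwards [this] with x hx
    simpa [sub_eq_zero] using hx
  -- The order of `f ^ 2` at `x₀` is even and that of `F ^ 2 * (a * (· - x₀))` odd unless infinite.
  have hord := analyticOrderAt_congr hsq
  have hlin1 : analyticOrderAt (fun x => a * (x - x₀)) x₀ = 1 := by
    exact_mod_cast (hlin.analyticOrderAt_eq_natCast (n := 1)).2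
      ⟨fun _ => a, analyticAt_const, ha, Eventually.of_forall fun x => by simp [mul_comm]⟩
  rw [show (fun x => f x ^ 2) = f ^ 2 from rfl, analyticOrderAt_pow hf,
    show (fun x => F x ^ 2 * (a * (x - x₀))) = F ^ 2 * fun x => a * (x - x₀) from rfl,
    analyticOrderAt_mul (hF.pow 2) hlin, analyticOrderAt_pow hF, hlin1] at hord
  refine analyticOrderAt_eq_top.1 ?_
  cases hm : analyticOrderAt f x₀ with
  | top => rfl
  | coe m =>
    cases hn : analyticOrderAt F x₀ with
    | top =>
      simp only [hm, hn, nsmul_eq_mul] at hord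
      exact absurd hord (by simpa using ENat.natCast_ne_top (2 * m))
    | coe n =>
      simp only [hm, hn, nsmul_eq_mul] at hord
      have : 2 * m = 2 * n + 1 := by exact_mod_cast hord
      omega

theorem pos_of_forall_root_le_dist {f : ℝ → ℝ} (hf : Continuous f) {c ρ : ℝ} (hc : 0 < f c)
    (hroots : ∀ z, f z = 0 → ρ ≤ dist z c) : ∀ x ∈ ball c ρ, 0 < f x := by
  intro x hx
  by_contra! hfx
  obtain ⟨z, hz, hfz⟩ :=
    intermediate_value_uIcc hf.continuousOn (mem_uIcc.2 (Or.inr ⟨hfx, hc.le⟩))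
  linarith [hroots z hfz, Real.dist_left_le_of_mem_uIcc hz, dist_comm c z, dist_comm c x,
    mem_ball.1 hx]

section RootReduction

variable {c x₀ : ℝ}

-- The scaling makes it positive on the ball about `c` reaching `x₀`.
noncomputable def sideFactor (c x₀ : ℝ) : ℝ[X] := C (c - x₀) * (X - C x₀)

noncomputable def cofactor (c x₀ : ℝ) (R : ℝ[X]) : ℝ[X] :=
  C ((c - x₀) ^ R.rootMultiplicity x₀)⁻¹ * (R /ₘ (X - C x₀) ^ R.rootMultiplicity x₀)

theorem eval_sideFactor (x : ℝ) : (sideFactor c x₀).eval x = (c - x₀) * (x - x₀) := by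
  simp [sideFactor]

theorem natDegree_sideFactor_le : (sideFactor c x₀).natDegree ≤ 1 :=
  (natDegree_C_mul_le _ _).trans (natDegree_X_sub_C x₀).le

theorem eval_sideFactor_pos {x : ℝ} (hx : dist x c < dist x₀ c) : 0 < (sideFactor c x₀).eval x := by
  rw [Real.dist_eq, Real.dist_eq, abs_sub_comm x₀] at hx
  have hmul : |c - x₀| * |x - c| < |c - x₀| * |c - x₀| :=
    mul_lt_mul_of_pos_left hx ((abs_nonneg _).trans_lt hx)
  have hneg := neg_abs_le ((c - x₀) * (x - c))
  rw [abs_mul] at hneg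
  rw [eval_sideFactor]
  nlinarith [abs_mul_abs_self (c - x₀)]

theorem sideFactor_pow_mul_cofactor (h : c ≠ x₀) (R : ℝ[X]) :
    sideFactor c x₀ ^ R.rootMultiplicity x₀ * cofactor c x₀ R = R := by
  have hc : (c - x₀) ^ R.rootMultiplicity x₀ ≠ 0 := pow_ne_zero _ (sub_ne_zero.2 h)
  conv_rhs => rw [← pow_mul_divByMonic_rootMultiplicity_eq R x₀]
  rw [sideFactor, cofactor, mul_pow, ← C_pow, mul_mul_mul_comm, ← C_mul, mul_inv_cancel₀ hc, C_1,
    one_mul]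

theorem eval_cofactor_ne_zero {R : ℝ[X]} (hR : R ≠ 0) (h : c ≠ x₀) :
    (cofactor c x₀ R).eval x₀ ≠ 0 := by
  rw [cofactor, eval_mul, eval_C]
  exact mul_ne_zero (inv_ne_zero (pow_ne_zero _ (sub_ne_zero.2 h)))
    (eval_divByMonic_pow_rootMultiplicity_ne_zero x₀ hR)

theorem natDegree_cofactor_add {R : ℝ[X]} (h : c ≠ x₀) :
    (cofactor c x₀ R).natDegree + R.rootMultiplicity x₀ = R.natDegree := by
  have hc : (c - x₀) ^ R.rootMultiplicity x₀ ≠ 0 := pow_ne_zero _ (sub_ne_zero.2 h)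
  rw [cofactor, natDegree_C_mul (inv_ne_zero hc), natDegree_divByMonic _ ((monic_X_sub_C x₀).pow _),
    natDegree_pow, natDegree_X_sub_C, mul_one, Nat.sub_add_cancel]
  exact count_roots R ▸ (Multiset.count_le_card _ _).trans (card_roots' R)

theorem Polynomial.Splits.cofactor {R : ℝ[X]} (hR : R.Splits) (hR0 : R ≠ 0) (h : c ≠ x₀) :
    (cofactor c x₀ R).Splits :=
  hR.of_dvd hR0 (Dvd.intro_left _ (sideFactor_pow_mul_cofactor h R))

theorem mem_closure_ball_dist (h : c ≠ x₀) : x₀ ∈ closure (ball c (dist x₀ c)) := by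
  rw [closure_ball _ (dist_pos.2 h.symm).ne']
  exact mem_closedBall.2 le_rfl

theorem eval_cofactor_pos {R : ℝ[X]} (hR : R ≠ 0) (h : c ≠ x₀)
    (hpos : ∀ x ∈ ball c (dist x₀ c), 0 < R.eval x) : 0 < (cofactor c x₀ R).eval x₀ := by
  have hball : ∀ x ∈ ball c (dist x₀ c), 0 ≤ (cofactor c x₀ R).eval x := fun x hx => by
    have := hpos x hx
    rw [← sideFactor_pow_mul_cofactor h R, eval_mul, eval_pow] at this
    exact (pos_of_mul_pos_right this (pow_nonneg (eval_sideFactor_pos hx).le _)).le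
  have h0 : 0 ≤ (cofactor c x₀ R).eval x₀ := closure_minimal hball
    (isClosed_le continuous_const (cofactor c x₀ R).continuous) (mem_closure_ball_dist h)
  exact h0.lt_of_ne' (eval_cofactor_ne_zero hR h)

end RootReduction

section SqrtSum

variable {ι : Type*}

noncomputable def evenPart (L : ℝ[X]) (k : ι → ℕ) (P : ι → ℝ[X]) (j : ι) : ℝ[X] :=
  if Even (k j) then P j * L ^ (k j / 2) else 0

noncomputable def oddPart (L : ℝ[X]) (k : ι → ℕ) (P : ι → ℝ[X]) (j : ι) : ℝ[X] :=
  if Even (k j) then 0 else P j * L ^ (k j / 2)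

theorem natDegree_evenPart_le {L : ℝ[X]} (hL : L.natDegree ≤ 1) (k : ι → ℕ) (P : ι → ℝ[X])
    (j : ι) : (evenPart L k P j).natDegree ≤ (P j).natDegree + k j / 2 := by
  unfold evenPart
  split_ifs
  · have := (natDegree_pow_le (p := L) (n := k j / 2)).trans (Nat.mul_le_mul_left _ hL)
    exact natDegree_mul_le.trans (by omega)
  · simp

variable [Fintype ι]

noncomputable def sqrtSum (P R : ι → ℝ[X]) (x : ℝ) : ℝ := ∑ j, (P j).eval x * √((R j).eval x)

theorem analyticAt_sqrtSum {P R : ι → ℝ[X]} {x : ℝ} (hR : ∀ j, 0 < (R j).eval x) :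
    AnalyticAt ℝ (sqrtSum P R) x := by
  have : sqrtSum P R = ∑ j, fun y => (P j).eval y * √((R j).eval y) := by
    ext y; simp [sqrtSum]
  rw [this]
  exact Finset.analyticAt_sum _ fun j _ =>
    (analyticAt_eval _ x).mul
      ((Real.analyticAt_sqrt (hR j)).comp (f := fun y => (R j).eval y) (analyticAt_eval _ x))

theorem sqrtSum_eq_evenPart_add_oddPart {L : ℝ[X]} {k : ι → ℕ} {P R T : ι → ℝ[X]}
    (hRT : ∀ j, R j = L ^ k j * T j) {x : ℝ} (hL : 0 ≤ L.eval x) :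
    sqrtSum P R x = sqrtSum (evenPart L k P) T x + sqrtSum (oddPart L k P) T x * √(L.eval x) := by
  simp only [sqrtSum, Finset.sum_mul, ← Finset.sum_add_distrib]
  refine Finset.sum_congr rfl fun j _ => ?_
  rw [hRT, eval_mul, eval_pow, evenPart, oddPart]
  obtain ⟨i, hi | hi⟩ := Nat.even_or_odd' (k j)
  · rw [if_pos ⟨i, by omega⟩, if_pos ⟨i, by omega⟩, hi, pow_mul', Real.sqrt_mul (sq_nonneg _),
      Real.sqrt_sq (pow_nonneg hL _), Nat.mul_div_cancel_left i two_pos]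
    simp only [eval_mul, eval_pow, eval_zero]
    ring
  · have hodd : ¬ Even (k j) := Nat.not_even_iff_odd.2 ⟨i, hi⟩
    rw [if_neg hodd, if_neg hodd, hi, pow_succ, pow_mul', mul_assoc, Real.sqrt_mul (sq_nonneg _),
      Real.sqrt_sq (pow_nonneg hL _), Real.sqrt_mul hL, show (2 * i + 1) / 2 = i by omega]
    simp only [eval_mul, eval_pow, eval_zero]
    ring

theorem exists_sqrtSum_eq_eval_of_natDegree_eq_zero {d : ℕ} {P R : ι → ℝ[X]}
    (hP : ∀ j, (P j).natDegree ≤ d) (hR : ∀ j, (R j).natDegree = 0) :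
    ∃ Q : ℝ[X], Q.natDegree ≤ d ∧ sqrtSum P R = fun x => Q.eval x := by
  refine ⟨∑ j, C √((R j).coeff 0) * P j, ?_, ?_⟩
  · exact natDegree_sum_le_of_forall_le _ _ fun j _ => (natDegree_C_mul_le _ _).trans (hP j)
  · ext x
    simp only [sqrtSum, eval_finsetSum, eval_mul, eval_C]
    refine Finset.sum_congr rfl fun j _ => ?_
    rw [mul_comm, eq_C_of_natDegree_eq_zero (hR j), eval_C, coeff_C_zero]

theorem exists_nearest_root {R : ι → ℝ[X]} (hR : ∀ j, R j ≠ 0) {j₀ : ι} {z₀ : ℝ}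
    (hz₀ : (R j₀).IsRoot z₀) (c : ℝ) :
    ∃ x₀, (∃ j, (R j).IsRoot x₀) ∧ ∀ j z, (R j).IsRoot z → dist x₀ c ≤ dist z c := by
  classical
  have hmem : ∀ j z, (R j).IsRoot z → z ∈ Finset.univ.biUnion fun j => (R j).roots.toFinset :=
    fun j z hz => Finset.mem_biUnion.2 ⟨j, Finset.mem_univ _, by simpa [hR j] using hz⟩
  obtain ⟨x₀, hx₀, hmin⟩ := Finset.exists_min_image _ (fun z => dist z c) ⟨z₀, hmem j₀ z₀ hz₀⟩
  obtain ⟨j, -, hj⟩ := Finset.mem_biUnion.1 hx₀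
  exact ⟨x₀, ⟨j, (mem_roots (hR j)).1 (Multiset.mem_toFinset.1 hj)⟩,
    fun j z hz => hmin z (hmem j z hz)⟩

theorem eventuallyEq_sqrtSum_evenPart {g : ℝ → ℝ} {P R : ι → ℝ[X]} {c x₀ : ℝ}
    (hg : AnalyticAt ℝ g x₀) (hR : ∀ j, R j ≠ 0) (h : c ≠ x₀)
    (hpos : ∀ j, ∀ x ∈ ball c (dist x₀ c), 0 < (R j).eval x)
    (hgR : EqOn g (sqrtSum P R) (ball c (dist x₀ c))) :
    g =ᶠ[𝓝 x₀] sqrtSum (evenPart (sideFactor c x₀) (fun j => (R j).rootMultiplicity x₀) P)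
      fun j => cofactor c x₀ (R j) := by
  set B := ball c (dist x₀ c)
  set k := fun j => (R j).rootMultiplicity x₀
  set T := fun j => cofactor c x₀ (R j)
  have hx₀B : x₀ ∈ closure B := mem_closure_ball_dist h
  have hT : ∀ j, 0 < (T j).eval x₀ := fun j => eval_cofactor_pos (hR j) h (hpos j)
  have hdecomp : ∀ x ∈ B, g x - sqrtSum (evenPart (sideFactor c x₀) k P) T x =
      sqrtSum (oddPart (sideFactor c x₀) k P) T x * √((sideFactor c x₀).eval x) := fun x hx => by
    rw [hgR hx, sqrtSum_eq_evenPart_add_oddPart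
      (fun j => (sideFactor_pow_mul_cofactor h (R j)).symm) (eval_sideFactor_pos hx).le,
      add_sub_cancel_left]
  have hsq : ∃ᶠ x in 𝓝[≠] x₀, (g x - sqrtSum (evenPart (sideFactor c x₀) k P) T x) ^ 2 =
      sqrtSum (oddPart (sideFactor c x₀) k P) T x ^ 2 * ((c - x₀) * (x - x₀)) := by
    refine frequently_nhdsWithin_iff.2 ((mem_closure_iff_frequently.1 hx₀B).mono fun x hx => ?_)
    refine ⟨?_, fun hxx₀ => (mem_ball.1 hx).ne (by rw [hxx₀])⟩
    rw [hdecomp x hx, mul_pow, Real.sq_sqrt (eval_sideFactor_pos hx).le, eval_sideFactor]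
  filter_upwards [(hg.sub (analyticAt_sqrtSum hT)).eventually_eq_zero_of_sq_eq_sq_mul
    (analyticAt_sqrtSum hT) (sub_ne_zero.2 h) hsq] with x hx
  exact sub_eq_zero.1 hx

theorem exists_polynomial_of_eventuallyEq_sqrtSum {g : ℝ → ℝ} (hg : ∀ x, AnalyticAt ℝ g x)
    {d : ℕ} {P R : ι → ℝ[X]} {c : ℝ} (hsplit : ∀ j, (R j).Splits)
    (hdeg : ∀ j, 2 * (P j).natDegree + (R j).natDegree ≤ 2 * d) (hc : ∀ j, 0 < (R j).eval c)
    (hgc : g =ᶠ[𝓝 c] sqrtSum P R) : ∃ Q : ℝ[X], Q.natDegree ≤ d ∧ ∀ x, g x = Q.eval x := by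
  induction hn : ∑ j, (R j).natDegree using Nat.strong_induction_on generalizing P R c with
  | _ n ih =>
  have hR0 : ∀ j, R j ≠ 0 := fun j h0 => by simpa [h0] using hc j
  by_cases hconst : ∀ j, (R j).natDegree = 0
  · obtain ⟨Q, hQd, hQ⟩ := exists_sqrtSum_eq_eval_of_natDegree_eq_zero (d := d) (P := P)
      (fun j => by linarith [hdeg j, hconst j]) hconst
    exact ⟨Q, hQd, congrFun (AnalyticOnNhd.eq_of_eventuallyEq (fun x _ => hg x)
      (fun x _ => analyticAt_eval Q x) (hQ ▸ hgc))⟩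
  obtain ⟨j₀, hj₀⟩ := not_forall.1 hconst
  obtain ⟨z₀, hz₀⟩ := (hsplit j₀).exists_eval_eq_zero (by
    rwa [degree_eq_natDegree (hR0 j₀), Nat.cast_ne_zero])
  obtain ⟨x₀, ⟨j₁, hj₁⟩, hmin⟩ := exists_nearest_root hR0 hz₀ c
  have h : c ≠ x₀ := fun hcx => (hc j₁).ne' (hcx ▸ hj₁)
  have hpos : ∀ j, ∀ x ∈ ball c (dist x₀ c), 0 < (R j).eval x := fun j =>
    pos_of_forall_root_le_dist (R j).continuous (hc j) (hmin j)
  have hgR : EqOn g (sqrtSum P R) (ball c (dist x₀ c)) :=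
    AnalyticOnNhd.eqOn_of_preconnected_of_eventuallyEq (fun x _ => hg x)
      (fun x hx => analyticAt_sqrtSum fun j => hpos j x hx) (convex_ball c _).isPreconnected
      (mem_ball_self (dist_pos.2 h.symm)) hgc
  have hdeg_add := fun j => natDegree_cofactor_add h (R := R j)
  refine ih _ ?_ (fun j => (hsplit j).cofactor (hR0 j) h) (fun j => ?_)
    (fun j => eval_cofactor_pos (hR0 j) h (hpos j))
    (eventuallyEq_sqrtSum_evenPart (hg x₀) hR0 h hpos hgR) rfl
  · rw [← hn]
    refine Finset.sum_lt_sum (fun j _ => by linarith [hdeg_add j]) ⟨j₁, Finset.mem_univ _, ?_⟩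
    linarith [hdeg_add j₁, (rootMultiplicity_pos (hR0 j₁)).2 hj₁]
  · have := natDegree_evenPart_le (natDegree_sideFactor_le (c := c) (x₀ := x₀))
      (fun j => (R j).rootMultiplicity x₀) P j
    have := hdeg j
    have := hdeg_add j
    omega

end SqrtSum

theorem natDegree_prod_le_card_mul {R κ : Type*} [CommSemiring R] [Fintype κ] {f : κ → R[X]}
    {n : ℕ} (h : ∀ i, (f i).natDegree ≤ n) : (∏ i, f i).natDegree ≤ Fintype.card κ * n :=
  (natDegree_prod_le _ _).trans ((Finset.sum_le_sum fun i _ => h i).trans (by simp))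

theorem natDegree_one_sub_sq_linear_le (u v : ℝ) : (1 - (C u * X + C v) ^ 2).natDegree ≤ 2 := by
  compute_degree

theorem splits_one_sub_sq_linear (u v : ℝ) : (1 - (C u * X + C v) ^ 2).Splits := by
  rw [show (1 - (C u * X + C v) ^ 2 : ℝ[X]) = (C (-u) * X + C (1 - v)) * (C u * X + C (1 + v)) by
    simp only [C_neg, C_sub, C_add, C_1]; ring]
  exact (Splits.of_natDegree_le_one natDegree_linear_le).mul
    (Splits.of_natDegree_le_one natDegree_linear_le)

/-- STATEMENT 14 (Lemma on sc-monomials): let `μ_1, …, μ_m` be sc-monomials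
`μ_j(x) = Π_i (A_{j,i} x + B_{j,i}) · Π_l √(1 - (U_{j,l} x + V_{j,l})²)` of degrees
`p_j + q_j ≤ d`, with nonempty common interval of definition
`I = { x : |U_{j,l} x + V_{j,l}| < 1 for all j, l }`, and let `g = Σ_j α_j μ_j` on `I`.
If a real-analytic function `g̃ : ℝ → ℝ` restricts to `g` on `I`, then `g̃` is a
polynomial of degree at most `d`. -/
theorem scMonomial_analytic_continuation_is_polynomial
    (m d : ℕ) (p q : Fin m → ℕ)
    (A B : (j : Fin m) → Fin (p j) → ℝ)
    (U V : (j : Fin m) → Fin (q j) → ℝ)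
    (hdeg : ∀ j, p j + q j ≤ d)
    (α : Fin m → ℝ)
    (I : Set ℝ) (hI : I = {x : ℝ | ∀ (j : Fin m) (l : Fin (q j)), |U j l * x + V j l| < 1})
    (hne : I.Nonempty)
    (gt : ℝ → ℝ) (hgt : ∀ x : ℝ, AnalyticAt ℝ gt x)
    (hres : ∀ x ∈ I, gt x =
      ∑ j, α j * ((∏ i, (A j i * x + B j i)) *
        ∏ l, Real.sqrt (1 - (U j l * x + V j l) ^ 2))) :
    ∃ P : Polynomial ℝ, P.natDegree ≤ d ∧ ∀ x : ℝ, gt x = P.eval x := by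
  obtain ⟨c, hc⟩ := hne
  have hradicand : ∀ x ∈ I, ∀ j l, 0 < 1 - (U j l * x + V j l) ^ 2 := fun x hx j l => by
    rw [hI] at hx
    exact sub_pos.2 ((sq_lt_one_iff_abs_lt_one _).2 (hx j l))
  have hI_nhds : I ∈ 𝓝 c := by
    rw [hI] at hc ⊢
    exact eventually_all.2 fun j => eventually_all.2 fun l =>
      ContinuousAt.eventually_lt (by fun_prop) continuousAt_const (hc j l)
  refine exists_polynomial_of_eventuallyEq_sqrtSum hgt (d := d)
    (P := fun j => C (α j) * ∏ i, (C (A j i) * X + C (B j i)))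
    (R := fun j => ∏ l, (1 - (C (U j l) * X + C (V j l)) ^ 2)) (c := c)
    (fun j => Splits.prod fun l _ => splits_one_sub_sq_linear _ _) (fun j => ?_) (fun j => ?_) ?_
  · have hP := (natDegree_C_mul_le (α j) _).trans
      (natDegree_prod_le_card_mul fun i => natDegree_linear_le (a := A j i) (b := B j i))
    have hR := natDegree_prod_le_card_mul fun l => natDegree_one_sub_sq_linear_le (U j l) (V j l)
    simp only [Fintype.card_fin] at hP hR
    linarith [hdeg j]
  · simpa [eval_prod] using Finset.prod_pos fun l _ => hradicand c hc j l
  · filter_upwards [hI_nhds] with x hx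
    rw [hres x hx, sqrtSum]
    refine Finset.sum_congr rfl fun j _ => ?_
    simp [eval_prod, Real.sqrt_prod _ fun l _ => (hradicand x hx j l).le, mul_assoc]
end

section
/- Fix n ≥ 1, x_0 ∈ ℝ, and a, b ∈ ℝ^n with −1 < a_j x_0 + b_j < 1 for all j, and let ε > 0 be such that |a_j x + b_j| < 1 for all j and all x ∈ I := (x_0 − ε, x_0 + ε). Then every function of the form x ↦ f( arcsin(a_1 x + b_1)/(2π), ..., arcsin(a_n x + b_n)/(2π) ) on I, where f(η) = Σ_{w ∈ {−1,0,1}^n} c_w e^{2πi w • η} is real-valued, is an ℝ-linear combination of the functions μ_{S,C}(x) = Π_{j ∈ S} (a_j x + b_j) · Π_{j ∈ C} √(1 − (a_j x + b_j)²), indexed by pairs of disjoint subsets S, C ⊆ {1, ..., n}. Consequently, the ℝ-vector space spanned by all such functions on I has dimension at most 3^n. -/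
open Complex Real

namespace ArcsinEncodingAux

variable {n : ℕ}

/-- fibers of a trit string -/
def fil (k : Fin 3) (p : Fin n → Fin 3) : Finset (Fin n) := Finset.univ.filter fun j => p j = k

/-- complex coefficient of the sc-monomial indexed by `(S, C)` coming from frequency `w` -/
def γ (w : Fin n → ℝ) (S C : Finset (Fin n)) : ℂ :=
  (∏ j ∈ (S ∪ C)ᶜ, ((1 : ℂ) - (w j : ℂ) ^ 2)) * (∏ j ∈ C, ((w j : ℂ) ^ 2))
    * ∏ j ∈ S, (Complex.I * (w j : ℂ))

lemma fin3_cases (m : Fin 3) : m = 0 ∨ m = 1 ∨ m = 2 := by fin_cases m <;> simp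

lemma key_sum {M : Type*} [AddCommMonoid M] (G : Finset (Fin n) → Finset (Fin n) → M) :
    ∑ p : Fin n → Fin 3, G (fil 2 p) (fil 1 p)
      = ∑ S : Finset (Fin n), ∑ C : Finset (Fin n), if Disjoint S C then G S C else 0 := by
  rw [← Finset.sum_product' (s := Finset.univ) (t := Finset.univ)
    (f := fun S C => if Disjoint S C then G S C else 0), ← Finset.sum_filter]
  refine Finset.sum_bij' (fun p _ => (fil 2 p, fil 1 p))
    (fun q _ => fun j => if j ∈ q.1 then 2 else if j ∈ q.2 then 1 else 0) ?_ ?_ ?_ ?_ ?_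
  · intro p _
    have hd : Disjoint (fil 2 p) (fil 1 p) := by
      rw [Finset.disjoint_left]
      intro j hj hj'
      simp only [fil, Finset.mem_filter, Finset.mem_univ, true_and] at hj hj'
      rw [hj] at hj'; exact absurd hj' (by decide)
    simp [Finset.mem_filter, Finset.mem_product, hd]
  · intro q _; exact Finset.mem_univ _
  · intro p _
    funext j
    rcases fin3_cases (p j) with h | h | h <;>
      simp [fil, h]
  · intro q hq
    simp only [Finset.mem_filter, Finset.mem_product] at hq
    have hd := hq.2
    ext1
    · ext j
      simp only [fil, Finset.mem_filter, Finset.mem_univ, true_and]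
      by_cases h1 : j ∈ q.1
      · simp [h1]
      · by_cases h2 : j ∈ q.2 <;> simp [h1, h2]
    · ext j
      simp only [fil, Finset.mem_filter, Finset.mem_univ, true_and]
      by_cases h1 : j ∈ q.1
      · have : j ∉ q.2 := Finset.disjoint_left.mp hd h1
        simp [h1, this]
      · by_cases h2 : j ∈ q.2 <;> simp [h1, h2]
  · intro p _; rfl

lemma exp_factor {w t : ℝ} (hw : w ∈ ({-1, 0, 1} : Finset ℝ)) (ht : |t| < 1) :
    Complex.exp (Complex.I * w * (Real.arcsin t : ℝ))
      = ((1 - w ^ 2 : ℝ) : ℂ) + ((w ^ 2 : ℝ) : ℂ) * ((Real.sqrt (1 - t ^ 2) : ℝ) : ℂ)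
        + Complex.I * w * t := by
  have h1 : -1 ≤ t := (abs_lt.mp ht).1.le
  have h2 : t ≤ 1 := (abs_lt.mp ht).2.le
  have hcos : Real.cos (Real.arcsin t) = Real.sqrt (1 - t ^ 2) := Real.cos_arcsin t
  have hsin : Real.sin (Real.arcsin t) = t := Real.sin_arcsin h1 h2
  simp only [Finset.mem_insert, Finset.mem_singleton] at hw
  rcases hw with rfl | rfl | rfl
  · have : Complex.I * (-1 : ℝ) * (Real.arcsin t : ℂ) = (-(Real.arcsin t) : ℝ) * Complex.I := by
      push_cast; ring
    rw [this, Complex.exp_mul_I, ← Complex.ofReal_cos, ← Complex.ofReal_sin,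
      Real.cos_neg, Real.sin_neg, hcos, hsin]
    push_cast; ring
  · simp
  · have : Complex.I * (1 : ℝ) * (Real.arcsin t : ℂ) = (Real.arcsin t : ℝ) * Complex.I := by
      push_cast; ring
    rw [this, Complex.exp_mul_I, ← Complex.ofReal_cos, ← Complex.ofReal_sin, hcos, hsin]
    push_cast; ring

lemma fil0_eq (p : Fin n → Fin 3) : fil 0 p = (fil 2 p ∪ fil 1 p)ᶜ := by
  ext j
  simp only [fil, Finset.mem_filter, Finset.mem_univ, true_and, Finset.mem_compl,
    Finset.mem_union, not_or]
  rcases fin3_cases (p j) with h | h | h <;> simp [h]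

lemma prod_term (w t : Fin n → ℝ) (p : Fin n → Fin 3) :
    (∏ j, (![((1 - w j ^ 2 : ℝ) : ℂ),
        ((w j ^ 2 : ℝ) : ℂ) * ((Real.sqrt (1 - t j ^ 2) : ℝ) : ℂ),
        Complex.I * (w j : ℂ) * (t j : ℂ)] : Fin 3 → ℂ) (p j))
      = γ w (fil 2 p) (fil 1 p) * ((∏ j ∈ fil 2 p, t j : ℝ) : ℂ)
          * ((∏ j ∈ fil 1 p, Real.sqrt (1 - t j ^ 2) : ℝ) : ℂ) := by
  rw [← Finset.prod_fiberwise Finset.univ p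
    (fun j => (![((1 - w j ^ 2 : ℝ) : ℂ),
        ((w j ^ 2 : ℝ) : ℂ) * ((Real.sqrt (1 - t j ^ 2) : ℝ) : ℂ),
        Complex.I * (w j : ℂ) * (t j : ℂ)] : Fin 3 → ℂ) (p j))]
  rw [Fin.prod_univ_three]
  have h0 : ∀ k : Fin 3, (Finset.filter (fun j => p j = k) Finset.univ) = fil k p := fun _ => rfl
  have hc : ∀ (k : Fin 3),
      (∏ j ∈ fil k p, (![((1 - w j ^ 2 : ℝ) : ℂ),
        ((w j ^ 2 : ℝ) : ℂ) * ((Real.sqrt (1 - t j ^ 2) : ℝ) : ℂ),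
        Complex.I * (w j : ℂ) * (t j : ℂ)] : Fin 3 → ℂ) (p j))
        = ∏ j ∈ fil k p, (![((1 - w j ^ 2 : ℝ) : ℂ),
        ((w j ^ 2 : ℝ) : ℂ) * ((Real.sqrt (1 - t j ^ 2) : ℝ) : ℂ),
        Complex.I * (w j : ℂ) * (t j : ℂ)] : Fin 3 → ℂ) k := by
    intro k
    refine Finset.prod_congr rfl fun j hj => ?_
    simp only [fil, Finset.mem_filter] at hj
    rw [hj.2]
  rw [h0, h0, h0, hc 0, hc 1, hc 2]
  simp only [Matrix.cons_val_zero, Matrix.cons_val_one, Matrix.head_cons, Matrix.cons_val_two,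
    Matrix.tail_cons]
  rw [fil0_eq]
  rw [Finset.prod_mul_distrib, Finset.prod_mul_distrib]
  push_cast
  unfold γ
  ring

lemma complex_eq (t : Fin n → ℝ) (ht : ∀ j, |t j| < 1) (c : (Fin n → ℝ) → ℂ) :
    ∑ w ∈ Fintype.piFinset (fun _ : Fin n => ({-1, 0, 1} : Finset ℝ)),
        c w * Complex.exp (2 * (Real.pi : ℂ) * Complex.I *
          (((∑ j, w j * (Real.arcsin (t j) / (2 * Real.pi))) : ℝ) : ℂ))
      = ∑ S : Finset (Fin n), ∑ C : Finset (Fin n),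
          if Disjoint S C then
            (∑ w ∈ Fintype.piFinset (fun _ : Fin n => ({-1, 0, 1} : Finset ℝ)), c w * γ w S C)
              * (((∏ j ∈ S, t j : ℝ)) : ℂ) * ((∏ j ∈ C, Real.sqrt (1 - t j ^ 2) : ℝ) : ℂ)
          else 0 := by
  have hπ : ((Real.pi : ℂ)) ≠ 0 := Complex.ofReal_ne_zero.mpr Real.pi_ne_zero
  have hexp : ∀ w ∈ Fintype.piFinset (fun _ : Fin n => ({-1, 0, 1} : Finset ℝ)),
      Complex.exp (2 * (Real.pi : ℂ) * Complex.I *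
          (((∑ j, w j * (Real.arcsin (t j) / (2 * Real.pi))) : ℝ) : ℂ))
        = ∑ p : Fin n → Fin 3,
            γ w (fil 2 p) (fil 1 p) * ((∏ j ∈ fil 2 p, t j : ℝ) : ℂ)
              * ((∏ j ∈ fil 1 p, Real.sqrt (1 - t j ^ 2) : ℝ) : ℂ) := by
    intro w hw
    have h1 : 2 * (Real.pi : ℂ) * Complex.I *
        (((∑ j, w j * (Real.arcsin (t j) / (2 * Real.pi))) : ℝ) : ℂ)
        = ∑ j, Complex.I * (w j : ℂ) * ((Real.arcsin (t j) : ℝ) : ℂ) := by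
      push_cast
      rw [Finset.mul_sum]
      refine Finset.sum_congr rfl fun j _ => ?_
      field_simp
    rw [h1, Complex.exp_sum]
    have h2 : ∀ j, Complex.exp (Complex.I * (w j : ℂ) * ((Real.arcsin (t j) : ℝ) : ℂ))
        = ∑ k : Fin 3, (![((1 - w j ^ 2 : ℝ) : ℂ),
            ((w j ^ 2 : ℝ) : ℂ) * ((Real.sqrt (1 - t j ^ 2) : ℝ) : ℂ),
            Complex.I * (w j : ℂ) * (t j : ℂ)] : Fin 3 → ℂ) k := by
      intro j
      rw [exp_factor (Fintype.mem_piFinset.mp hw j) (ht j), Fin.sum_univ_three]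
      simp
    calc ∏ j, Complex.exp (Complex.I * (w j : ℂ) * ((Real.arcsin (t j) : ℝ) : ℂ))
        = ∏ j, ∑ k ∈ (Finset.univ : Finset (Fin 3)), (![((1 - w j ^ 2 : ℝ) : ℂ),
            ((w j ^ 2 : ℝ) : ℂ) * ((Real.sqrt (1 - t j ^ 2) : ℝ) : ℂ),
            Complex.I * (w j : ℂ) * (t j : ℂ)] : Fin 3 → ℂ) k :=
          Finset.prod_congr rfl fun j _ => h2 j
      _ = ∑ p ∈ Fintype.piFinset (fun _ : Fin n => (Finset.univ : Finset (Fin 3))),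
            ∏ j, (![((1 - w j ^ 2 : ℝ) : ℂ),
            ((w j ^ 2 : ℝ) : ℂ) * ((Real.sqrt (1 - t j ^ 2) : ℝ) : ℂ),
            Complex.I * (w j : ℂ) * (t j : ℂ)] : Fin 3 → ℂ) (p j) :=
          Finset.prod_univ_sum _ _
      _ = ∑ p : Fin n → Fin 3,
            γ w (fil 2 p) (fil 1 p) * ((∏ j ∈ fil 2 p, t j : ℝ) : ℂ)
              * ((∏ j ∈ fil 1 p, Real.sqrt (1 - t j ^ 2) : ℝ) : ℂ) := by
          rw [Fintype.piFinset_univ]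
          exact Finset.sum_congr rfl fun p _ => prod_term w t p
  calc ∑ w ∈ Fintype.piFinset (fun _ : Fin n => ({-1, 0, 1} : Finset ℝ)),
        c w * Complex.exp (2 * (Real.pi : ℂ) * Complex.I *
          (((∑ j, w j * (Real.arcsin (t j) / (2 * Real.pi))) : ℝ) : ℂ))
      = ∑ w ∈ Fintype.piFinset (fun _ : Fin n => ({-1, 0, 1} : Finset ℝ)),
          ∑ p : Fin n → Fin 3, c w * (γ w (fil 2 p) (fil 1 p) * ((∏ j ∈ fil 2 p, t j : ℝ) : ℂ)
              * ((∏ j ∈ fil 1 p, Real.sqrt (1 - t j ^ 2) : ℝ) : ℂ)) := by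
        refine Finset.sum_congr rfl fun w hw => ?_
        rw [hexp w hw, Finset.mul_sum]
    _ = ∑ p : Fin n → Fin 3,
          (∑ w ∈ Fintype.piFinset (fun _ : Fin n => ({-1, 0, 1} : Finset ℝ)),
            c w * γ w (fil 2 p) (fil 1 p))
            * ((∏ j ∈ fil 2 p, t j : ℝ) : ℂ)
            * ((∏ j ∈ fil 1 p, Real.sqrt (1 - t j ^ 2) : ℝ) : ℂ) := by
        rw [Finset.sum_comm]
        refine Finset.sum_congr rfl fun p _ => ?_
        rw [Finset.sum_mul, Finset.sum_mul]
        refine Finset.sum_congr rfl fun w _ => ?_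
        ring
    _ = _ := key_sum (fun S C =>
          (∑ w ∈ Fintype.piFinset (fun _ : Fin n => ({-1, 0, 1} : Finset ℝ)), c w * γ w S C)
            * (((∏ j ∈ S, t j : ℝ)) : ℂ) * ((∏ j ∈ C, Real.sqrt (1 - t j ^ 2) : ℝ) : ℂ))

end ArcsinEncodingAux

open ArcsinEncodingAux in
/-- fix `n ≥ 1`, `x₀ ∈ ℝ`, `a, b ∈ ℝⁿ` with `|aⱼ x₀ + bⱼ| < 1`, and `ε > 0`
with `|aⱼ x + bⱼ| < 1` on `I = (x₀ - ε, x₀ + ε)`. Every expectation value function with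
arcsine input encoding, `x ↦ f(arcsin(a₁x + b₁)/(2π), …, arcsin(aₙx + bₙ)/(2π))` on `I`,
is an `ℝ`-linear combination of the sc-monomials
`μ_{S,C}(x) = Π_{j∈S} (aⱼx + bⱼ) · Π_{j∈C} √(1 - (aⱼx + bⱼ)²)` indexed by disjoint
`S, C ⊆ {1, …, n}`; consequently, the `ℝ`-vector space spanned by all such functions on
`I` has dimension at most `3^n`. -/
theorem arcsin_encoding_span_dim_le (n : ℕ) (hn : 1 ≤ n) (x₀ : ℝ) (a b : Fin n → ℝ)
    (hx₀ : ∀ j, -1 < a j * x₀ + b j ∧ a j * x₀ + b j < 1)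
    (ε : ℝ) (hε : 0 < ε)
    (hbound : ∀ x ∈ Set.Ioo (x₀ - ε) (x₀ + ε), ∀ j, |a j * x + b j| < 1) :
    (∀ (f : (Fin n → ℝ) → ℝ) (c : (Fin n → ℝ) → ℂ),
      (∀ η : Fin n → ℝ, (f η : ℂ) =
        ∑ w ∈ Fintype.piFinset (fun _ : Fin n => ({-1, 0, 1} : Finset ℝ)),
          c w * Complex.exp (2 * Real.pi * Complex.I * (∑ j, w j * η j))) →
      ∃ β : Finset (Fin n) → Finset (Fin n) → ℝ,
        ∀ x ∈ Set.Ioo (x₀ - ε) (x₀ + ε),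
          f (fun j => Real.arcsin (a j * x + b j) / (2 * Real.pi)) =
            ∑ S : Finset (Fin n), ∑ C : Finset (Fin n),
              if Disjoint S C then
                β S C * ((∏ j ∈ S, (a j * x + b j)) *
                  ∏ j ∈ C, Real.sqrt (1 - (a j * x + b j) ^ 2))
              else 0)
    ∧ Module.rank ℝ
        ↥(Submodule.span ℝ
          {g : ↥(Set.Ioo (x₀ - ε) (x₀ + ε)) → ℝ |
            ∃ (f : (Fin n → ℝ) → ℝ) (c : (Fin n → ℝ) → ℂ),
              (∀ η : Fin n → ℝ, (f η : ℂ) =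
                ∑ w ∈ Fintype.piFinset (fun _ : Fin n => ({-1, 0, 1} : Finset ℝ)),
                  c w * Complex.exp (2 * Real.pi * Complex.I * (∑ j, w j * η j))) ∧
              ∀ x : ↥(Set.Ioo (x₀ - ε) (x₀ + ε)),
                g x = f (fun j => Real.arcsin (a j * (x : ℝ) + b j) / (2 * Real.pi))})
        ≤ ((3 ^ n : ℕ) : Cardinal) := by
  have hre : ∀ (z : ℂ) (r s : ℝ), (z * (r : ℂ) * (s : ℂ)).re = z.re * (r * s) := by
    intro z r s
    simp [Complex.mul_re]
    ring
  have part1 : ∀ (f : (Fin n → ℝ) → ℝ) (c : (Fin n → ℝ) → ℂ),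
      (∀ η : Fin n → ℝ, (f η : ℂ) =
        ∑ w ∈ Fintype.piFinset (fun _ : Fin n => ({-1, 0, 1} : Finset ℝ)),
          c w * Complex.exp (2 * Real.pi * Complex.I * (∑ j, w j * η j))) →
      ∃ β : Finset (Fin n) → Finset (Fin n) → ℝ,
        ∀ x ∈ Set.Ioo (x₀ - ε) (x₀ + ε),
          f (fun j => Real.arcsin (a j * x + b j) / (2 * Real.pi)) =
            ∑ S : Finset (Fin n), ∑ C : Finset (Fin n),
              if Disjoint S C then
                β S C * ((∏ j ∈ S, (a j * x + b j)) *
                  ∏ j ∈ C, Real.sqrt (1 - (a j * x + b j) ^ 2))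
              else 0 := by
    intro f c hf
    refine ⟨fun S C => (∑ w ∈ Fintype.piFinset (fun _ : Fin n => ({-1, 0, 1} : Finset ℝ)),
      c w * γ w S C).re, ?_⟩
    intro x hx
    have ht : ∀ j, |a j * x + b j| < 1 := hbound x hx
    have hfx := hf (fun j => Real.arcsin (a j * x + b j) / (2 * Real.pi))
    rw [complex_eq (fun j => a j * x + b j) ht c] at hfx
    have := congrArg Complex.re hfx
    rw [Complex.ofReal_re] at this
    rw [this, Complex.re_sum]
    refine Finset.sum_congr rfl fun S _ => ?_
    rw [Complex.re_sum]
    refine Finset.sum_congr rfl fun C _ => ?_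
    by_cases hd : Disjoint S C
    · simp only [hd, if_true]
      exact hre _ _ _
    · simp only [hd, if_false, Complex.zero_re]
  refine ⟨part1, ?_⟩
  set I := Set.Ioo (x₀ - ε) (x₀ + ε)
  set F : (Fin n → Fin 3) → (↥I → ℝ) := fun p x =>
    (∏ j ∈ fil 2 p, (a j * (x : ℝ) + b j)) *
      ∏ j ∈ fil 1 p, Real.sqrt (1 - (a j * (x : ℝ) + b j) ^ 2) with hF
  have hsub : Submodule.span ℝ
      {g : ↥I → ℝ |
        ∃ (f : (Fin n → ℝ) → ℝ) (c : (Fin n → ℝ) → ℂ),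
          (∀ η : Fin n → ℝ, (f η : ℂ) =
            ∑ w ∈ Fintype.piFinset (fun _ : Fin n => ({-1, 0, 1} : Finset ℝ)),
              c w * Complex.exp (2 * Real.pi * Complex.I * (∑ j, w j * η j))) ∧
          ∀ x : ↥I, g x = f (fun j => Real.arcsin (a j * (x : ℝ) + b j) / (2 * Real.pi))}
      ≤ Submodule.span ℝ (Set.range F) := by
    rw [Submodule.span_le]
    rintro g ⟨f, c, hf, hgf⟩
    obtain ⟨β, hβ⟩ := part1 f c hf
    have hg : g = ∑ p : Fin n → Fin 3, β (fil 2 p) (fil 1 p) • F p := by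
      funext x
      rw [hgf x, hβ (x : ℝ) x.2]
      rw [← key_sum (fun S C => β S C * ((∏ j ∈ S, (a j * (x : ℝ) + b j)) *
        ∏ j ∈ C, Real.sqrt (1 - (a j * (x : ℝ) + b j) ^ 2)))]
      rw [Finset.sum_apply]
      rfl
    rw [hg]
    exact Submodule.sum_mem _ fun p _ =>
      Submodule.smul_mem _ _ (Submodule.subset_span ⟨p, rfl⟩)
  calc Module.rank ℝ _ ≤ Module.rank ℝ ↥(Submodule.span ℝ (Set.range F)) :=
        Submodule.rank_mono hsub
    _ ≤ Cardinal.mk (Set.range F) := rank_span_le _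
    _ ≤ Cardinal.mk (Fin n → Fin 3) := Cardinal.mk_range_le
    _ = ((3 ^ n : ℕ) : Cardinal) := by
        rw [Cardinal.mk_fintype]
        congr 1
        simp
end

section
/- Let h be a real-valued function defined in some neighborhood of x_0 ∈ ℝ, and suppose there are n ≥ 1, an expectation value function f with input redundancy n, vectors a, b ∈ ℝ^n with −1 < a_j x_0 + b_j < 1 for all j, and ε > 0, such that h(x) = f( arcsin(a_1 x + b_1)/(2π), ..., arcsin(a_n x + b_n)/(2π) ) for all x ∈ (x_0 − ε, x_0 + ε). Then the sc-rank r of h at x_0 satisfies r ≤ 3^n; equivalently, n ≥ log_3(r). -/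
open Complex Real

/-- The sc-rank of `h : ℝ → ℝ` at `x₀`: the infimum over all `r` for which there are
sc-monomials `μ_1, …, μ_r` whose intervals of definition all contain `x₀`, real numbers
`α_1, …, α_r`, and an `ε > 0` such that `h = Σ_j α_j μ_j` on `(x₀ - ε, x₀ + ε)`. -/
noncomputable def scRank (h : ℝ → ℝ) (x₀ : ℝ) : ℕ∞ :=
  sInf {m : ℕ∞ | ∃ r : ℕ, m = (r : ℕ∞) ∧ ∃ (p q : Fin r → ℕ)
    (A B : (j : Fin r) → Fin (p j) → ℝ) (U V : (j : Fin r) → Fin (q j) → ℝ)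
    (α : Fin r → ℝ) (ε : ℝ), 0 < ε ∧
      (∀ (j : Fin r) (l : Fin (q j)), |U j l * x₀ + V j l| < 1) ∧
      ∀ x ∈ Set.Ioo (x₀ - ε) (x₀ + ε),
        h x = ∑ j, α j * ((∏ i, (A j i * x + B j i)) *
          ∏ l, Real.sqrt (1 - (U j l * x + V j l) ^ 2))}

/-- The coefficient contributed by the `t`-th term of the three-term expansion of
`exp (I * w * arcsin s)`. -/
noncomputable def scmKap (w : ℝ) (t : Fin 3) : ℂ :=
  if t = 1 then (w : ℂ) * Complex.I
  else if t = 2 then ((w ^ 2 : ℝ) : ℂ)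
  else ((1 - w ^ 2 : ℝ) : ℂ)

/-- The (real) monomial factor of the `t`-th term of the three-term expansion of
`exp (I * w * arcsin s)`. -/
noncomputable def scmMon (t : Fin 3) (s : ℝ) : ℝ :=
  if t = 1 then s else if t = 2 then Real.sqrt (1 - s ^ 2) else 1

lemma scm_exp_expand (w s : ℝ) (hw : w ∈ ({-1, 0, 1} : Finset ℝ))
    (hs : -1 ≤ s) (hs' : s ≤ 1) :
    Complex.exp (Complex.I * w * Real.arcsin s) =
      ∑ t : Fin 3, scmKap w t * (scmMon t s : ℂ) := by
  simp only [Finset.mem_insert, Finset.mem_singleton] at hw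
  have hcos := Real.cos_arcsin s
  have hsin := Real.sin_arcsin hs hs'
  rcases hw with rfl | rfl | rfl
  · have key : Complex.I * ((-1 : ℝ) : ℂ) * (Real.arcsin s : ℂ)
        = ((-Real.arcsin s : ℝ) : ℂ) * Complex.I := by push_cast; ring
    rw [key, Complex.exp_mul_I, ← Complex.ofReal_cos, ← Complex.ofReal_sin]
    simp only [Fin.sum_univ_three, scmKap, scmMon, Real.cos_neg, Real.sin_neg, hcos, hsin]
    norm_num
    push_cast
    ring
  · have key : Complex.I * ((0 : ℝ) : ℂ) * (Real.arcsin s : ℂ) = 0 := by push_cast; ring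
    rw [key, Complex.exp_zero]
    simp only [Fin.sum_univ_three, scmKap, scmMon]
    norm_num [Fin.ext_iff]
  · have key : Complex.I * ((1 : ℝ) : ℂ) * (Real.arcsin s : ℂ)
        = ((Real.arcsin s : ℝ) : ℂ) * Complex.I := by push_cast; ring
    rw [key, Complex.exp_mul_I, ← Complex.ofReal_cos, ← Complex.ofReal_sin]
    simp only [Fin.sum_univ_three, scmKap, scmMon, hcos, hsin]
    norm_num
    push_cast
    ring

/-- STATEMENT 17: if `h` agrees, near `x₀`, with an expectation value function with
input redundancy `n ≥ 1` under arcsine input encoding (with `-1 < aⱼx₀ + bⱼ < 1` for all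
`j`), then the sc-rank `r` of `h` at `x₀` satisfies `r ≤ 3^n`, i.e. `n ≥ log₃ r`. -/
theorem input_redundancy_lower_bound_arcsin (h : ℝ → ℝ) (x₀ : ℝ)
    (n : ℕ) (hn : 1 ≤ n)
    (f : (Fin n → ℝ) → ℝ) (c : (Fin n → ℝ) → ℂ)
    (hf : ∀ η : Fin n → ℝ, (f η : ℂ) =
      ∑ w ∈ Fintype.piFinset (fun _ : Fin n => ({-1, 0, 1} : Finset ℝ)),
        c w * Complex.exp (2 * Real.pi * Complex.I * (∑ j, w j * η j)))
    (a b : Fin n → ℝ)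
    (hx₀ : ∀ j, -1 < a j * x₀ + b j ∧ a j * x₀ + b j < 1)
    (ε : ℝ) (hε : 0 < ε)
    (hrep : ∀ x ∈ Set.Ioo (x₀ - ε) (x₀ + ε),
      h x = f (fun j => Real.arcsin (a j * x + b j) / (2 * Real.pi))) :
    ∃ r : ℕ, scRank h x₀ = (r : ℕ∞) ∧ r ≤ 3 ^ n ∧ Real.logb 3 r ≤ (n : ℝ) := by
  -- Find a small interval where all inputs are strictly within (-1,1)
  have hev : ∀ᶠ x in nhds x₀, ∀ j, |a j * x + b j| < 1 := by
    rw [Filter.eventually_all]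
    intro j
    have hc : ContinuousAt (fun x => |a j * x + b j|) x₀ := by fun_prop
    exact hc.eventually_lt continuousAt_const (abs_lt.2 (hx₀ j))
  rw [Metric.eventually_nhds_iff] at hev
  obtain ⟨δ, hδ, hδs⟩ := hev
  set ε' := min δ ε with hε'
  have hε'0 : 0 < ε' := lt_min hδ hε
  have hmem : ∀ x ∈ Set.Ioo (x₀ - ε') (x₀ + ε'),
      (∀ j, |a j * x + b j| < 1) ∧ x ∈ Set.Ioo (x₀ - ε) (x₀ + ε) := by
    intro x hx
    obtain ⟨hx1, hx2⟩ := hx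
    have hd : dist x x₀ < δ := by
      rw [Real.dist_eq, abs_lt]
      constructor <;> [nlinarith [min_le_left δ ε]; nlinarith [min_le_left δ ε]]
    refine ⟨hδs hd, ?_, ?_⟩ <;> nlinarith [min_le_right δ ε]
  set W := Fintype.piFinset (fun _ : Fin n => ({-1, 0, 1} : Finset ℝ)) with hW
  set e : (Fin n → Fin 3) ≃ Fin (3 ^ n) := finFunctionFinEquiv with he
  set α : (Fin n → Fin 3) → ℝ :=
    fun t => (∑ w ∈ W, c w * ∏ j, scmKap (w j) (t j)).re with hα
  have hmem3 : ((3 ^ n : ℕ) : ℕ∞) ∈ {m : ℕ∞ | ∃ r : ℕ, m = (r : ℕ∞) ∧ ∃ (p q : Fin r → ℕ)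
      (A B : (j : Fin r) → Fin (p j) → ℝ) (U V : (j : Fin r) → Fin (q j) → ℝ)
      (α : Fin r → ℝ) (ε : ℝ), 0 < ε ∧
        (∀ (j : Fin r) (l : Fin (q j)), |U j l * x₀ + V j l| < 1) ∧
        ∀ x ∈ Set.Ioo (x₀ - ε) (x₀ + ε),
          h x = ∑ j, α j * ((∏ i, (A j i * x + B j i)) *
            ∏ l, Real.sqrt (1 - (U j l * x + V j l) ^ 2))} := by
    refine ⟨3 ^ n, rfl, fun _ => n, fun _ => n,
      fun k i => if e.symm k i = 1 then a i else 0,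
      fun k i => if e.symm k i = 1 then b i else 1,
      fun k l => if e.symm k l = 2 then a l else 0,
      fun k l => if e.symm k l = 2 then b l else 0,
      fun k => α (e.symm k), ε', hε'0, ?_, ?_⟩
    · intro k l
      rcases eq_or_ne (e.symm k l) 2 with ht | ht <;> simp [ht]
      exact abs_lt.2 (hx₀ l)
    · intro x hx
      obtain ⟨hgood, hxε⟩ := hmem x hx
      set s : Fin n → ℝ := fun j => a j * x + b j with hs
      have hs1 : ∀ j, -1 ≤ s j := fun j => le_of_lt (abs_lt.1 (hgood j)).1
      have hs2 : ∀ j, s j ≤ 1 := fun j => le_of_lt (abs_lt.1 (hgood j)).2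
      have h1 : (h x : ℂ) = ∑ w ∈ W, c w *
          Complex.exp (2 * Real.pi * Complex.I *
            ((∑ j, w j * (Real.arcsin (s j) / (2 * Real.pi)) : ℝ) : ℂ)) := by
        rw [hrep x hxε, hf]
      have h2 : ∀ w ∈ W, Complex.exp (2 * Real.pi * Complex.I *
            ((∑ j, w j * (Real.arcsin (s j) / (2 * Real.pi)) : ℝ) : ℂ))
          = ∏ j, ∑ t : Fin 3, scmKap (w j) t * (scmMon t (s j) : ℂ) := by
        intro w hw
        have hexp : (2 * (Real.pi : ℂ) * Complex.I *
            ((∑ j, w j * (Real.arcsin (s j) / (2 * Real.pi)) : ℝ) : ℂ))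
            = ∑ j, Complex.I * (w j : ℂ) * (Real.arcsin (s j) : ℂ) := by
          push_cast
          rw [Finset.mul_sum]
          refine Finset.sum_congr rfl fun j _ => ?_
          have hπ : (Real.pi : ℂ) ≠ 0 := by exact_mod_cast Real.pi_ne_zero
          field_simp
        rw [hexp, Complex.exp_sum]
        refine Finset.prod_congr rfl fun j _ => ?_
        exact scm_exp_expand (w j) (s j)
          (Fintype.mem_piFinset.1 hw j) (hs1 j) (hs2 j)
      have h3 : (h x : ℂ) = ∑ t : Fin n → Fin 3,
          (∑ w ∈ W, c w * ∏ j, scmKap (w j) (t j)) *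
            ((∏ j, scmMon (t j) (s j) : ℝ) : ℂ) := by
        rw [h1, Finset.sum_congr rfl (fun w hw => by rw [h2 w hw])]
        have hps : ∀ w : Fin n → ℝ,
            (∏ j, ∑ t : Fin 3, scmKap (w j) t * (scmMon t (s j) : ℂ))
            = ∑ t : Fin n → Fin 3, ∏ j, scmKap (w j) (t j) * (scmMon (t j) (s j) : ℂ) := by
          intro w
          rw [Finset.prod_univ_sum (fun _ => (Finset.univ : Finset (Fin 3)))]
          simp [Fintype.piFinset_univ]
        simp only [hps, Finset.mul_sum]
        rw [Finset.sum_comm]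
        refine Finset.sum_congr rfl fun t _ => ?_
        rw [Finset.sum_mul]
        refine Finset.sum_congr rfl fun w _ => ?_
        rw [Finset.prod_mul_distrib]
        push_cast
        ring
      have h4 : h x = ∑ t : Fin n → Fin 3, α t * ∏ j, scmMon (t j) (s j) := by
        have hre := congrArg Complex.re h3
        rw [Complex.ofReal_re] at hre
        rw [hre, Complex.re_sum]
        refine Finset.sum_congr rfl fun t _ => ?_
        rw [mul_comm, Complex.re_ofReal_mul, hα]
        ring
      rw [h4, ← Equiv.sum_comp e.symm]
      refine Finset.sum_congr rfl fun k _ => ?_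
      congr 1
      rw [← Finset.prod_mul_distrib]
      refine Finset.prod_congr rfl fun j _ => ?_
      have htri : e.symm k j = 0 ∨ e.symm k j = 1 ∨ e.symm k j = 2 := by omega
      rcases htri with ht | ht | ht <;> simp [ht, scmMon, hs] <;> norm_num
  have hle : scRank h x₀ ≤ ((3 ^ n : ℕ) : ℕ∞) := sInf_le hmem3
  have hne : scRank h x₀ ≠ ⊤ := by
    intro htop
    rw [htop] at hle
    exact (lt_irrefl _ (lt_of_le_of_lt (le_trans le_top hle)
      (WithTop.coe_lt_top (3 ^ n : ℕ))))
  obtain ⟨r, hr⟩ := WithTop.ne_top_iff_exists.1 hne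
  have hrle : r ≤ 3 ^ n := by
    rw [← hr] at hle
    exact Nat.cast_le.mp hle
  refine ⟨r, hr.symm, hrle, ?_⟩
  rcases Nat.eq_zero_or_pos r with h0 | h0
  · simp [h0]
  · have h1 : (r : ℝ) ≤ (3 : ℝ) ^ (n : ℕ) := by exact_mod_cast hrle
    have h2 : Real.logb 3 r ≤ Real.logb 3 ((3 : ℝ) ^ (n : ℕ)) := by
      rw [Real.logb_le_logb (by norm_num) (by exact_mod_cast h0) (by positivity)]
      exact h1
    calc Real.logb 3 r ≤ Real.logb 3 ((3 : ℝ) ^ (n : ℕ)) := h2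
      _ = n := by rw [Real.logb_pow, Real.logb_self_eq_one (by norm_num)]; ring
end

section
/- There do not exist n ≥ 1, coefficients c_w ∈ ℂ for w ∈ {−1,0,1}^n making f(η) := Σ_{w ∈ {−1,0,1}^n} c_w e^{2πi w • η} real-valued, vectors a, b ∈ ℝ^n, a point x_0 ∈ ℝ, and ε > 0 with −1 ≤ a_j x + b_j ≤ 1 for all j and all x ∈ (x_0 − ε, x_0 + ε), such that sin(x) = f( arcsin(a_1 x + b_1)/(2π), ..., arcsin(a_n x + b_n)/(2π) ) for all x ∈ (x_0 − ε, x_0 + ε). That is, the sine function cannot be exactly represented in any neighborhood of any point by an expectation value function with arcsine input encoding. -/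
section SinNotRepresentableHelpers

open Polynomial Finset

lemma sin_trans (d : ℕ) : ∀ (q : ℕ → Polynomial ℂ), q d = 1 →
    (∀ x : ℝ, ∑ k ∈ Finset.range (d+1), (q k).eval (x:ℂ) * (Complex.sin x)^k = 0) → False := by
  induction d with
  | zero =>
    intro q hq h
    have := h 0
    simp [hq] at this
  | succ d ih =>
    intro q hq h
    have hq0 : q 0 = 0 := by
      apply Polynomial.eq_zero_of_infinite_isRoot
      apply Set.Infinite.mono (s := (fun k : ℕ => ((k * Real.pi : ℝ) : ℂ)) '' Set.univ)
      · rintro z ⟨k, -, rfl⟩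
        have hs : Complex.sin ((k * Real.pi : ℝ) : ℂ) = 0 := by
          rw [← Complex.ofReal_sin]
          simp [Real.sin_nat_mul_pi]
        have := h (k * Real.pi)
        rw [Finset.sum_range_succ'] at this
        simp only [hs, pow_succ, mul_zero, zero_mul, Finset.sum_const_zero, zero_add,
          pow_zero, mul_one] at this
        exact this
      · apply Set.Infinite.image
        · intro a _ b _ hab
          simp only at hab
          have : (a * Real.pi : ℝ) = b * Real.pi := by exact_mod_cast hab
          exact Nat.cast_injective (mul_right_cancel₀ Real.pi_ne_zero this)
        · exact Set.infinite_univ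
    set T : ℝ → ℂ := fun x => ∑ k ∈ Finset.range (d+1), (q (k+1)).eval (x:ℂ) * (Complex.sin x)^k with hT
    have hTzero : ∀ x : ℝ, Real.sin x ≠ 0 → T x = 0 := by
      intro x hx
      have hx' : Complex.sin x ≠ 0 := by
        rw [← Complex.ofReal_sin]
        exact_mod_cast hx
      have h1 := h x
      rw [Finset.sum_range_succ', hq0] at h1
      simp only [Polynomial.eval_zero, zero_mul, add_zero] at h1
      have h2 : Complex.sin x * T x = 0 := by
        rw [hT, Finset.mul_sum, ← h1]
        apply Finset.sum_congr rfl
        intro k _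
        ring
      rcases mul_eq_zero.1 h2 with h | h
      · exact absurd h hx'
      · exact h
    have hTcont : Continuous T := by
      apply continuous_finset_sum
      intro k _
      exact ((q (k+1)).continuous_aeval.comp Complex.continuous_ofReal).mul
        ((Complex.continuous_sin.comp Complex.continuous_ofReal).pow k)
    have hTall : ∀ x : ℝ, T x = 0 := by
      intro x
      by_cases hx : Real.sin x ≠ 0
      · exact hTzero x hx
      push_neg at hx
      have hcos : Real.cos x ≠ 0 := by
        intro hc
        have := Real.sin_sq_add_cos_sq x
        rw [hx, hc] at this; norm_num at this
      have hseq : Filter.Tendsto (fun m : ℕ => x + 1/(m+1)) Filter.atTop (nhds x) := by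
        have : Filter.Tendsto (fun m : ℕ => 1/((m:ℝ)+1)) Filter.atTop (nhds 0) :=
          tendsto_one_div_add_atTop_nhds_zero_nat
        simpa using (tendsto_const_nhds (x := x)).add this
      have hval : ∀ m : ℕ, T (x + 1/(m+1)) = 0 := by
        intro m
        apply hTzero
        rw [Real.sin_add, hx, zero_mul, zero_add]
        apply mul_ne_zero hcos
        apply ne_of_gt
        apply Real.sin_pos_of_pos_of_lt_pi
        · positivity
        · have h1 : 1/((m:ℝ)+1) ≤ 1 := by
            rw [div_le_one (by positivity)]; linarith [Nat.cast_nonneg (α := ℝ) m]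
          linarith [Real.pi_gt_three]
      have := (hTcont.continuousAt (x := x)).tendsto.comp hseq
      have h0 : Filter.Tendsto (fun m : ℕ => T (x + 1/(m+1))) Filter.atTop (nhds (T x)) := this
      rw [funext hval] at h0
      exact tendsto_nhds_unique h0 tendsto_const_nhds
    exact ih (fun k => q (k+1)) hq hTall

lemma sin_ext (d : ℕ) (q : ℕ → Polynomial ℂ) (x₀ ε : ℝ) (hε : 0 < ε)
    (h : ∀ x ∈ Set.Ioo (x₀ - ε) (x₀ + ε),
      ∑ k ∈ Finset.range (d+1), (q k).eval (x:ℂ) * (Complex.sin x)^k = 0) :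
    ∀ x : ℝ, ∑ k ∈ Finset.range (d+1), (q k).eval (x:ℂ) * (Complex.sin x)^k = 0 := by
  set G : ℂ → ℂ := fun z => ∑ k ∈ Finset.range (d+1), (q k).eval z * (Complex.sin z)^k with hG
  have hGdiff : Differentiable ℂ G := by
    apply Differentiable.fun_sum
    intro k _
    exact ((q k).differentiable).mul (Complex.differentiable_sin.pow k)
  have hGanal : AnalyticOnNhd ℂ G Set.univ :=
    hGdiff.differentiableOn.analyticOnNhd isOpen_univ
  have hanal : AnalyticOnNhd ℝ (fun x : ℝ => G x) Set.univ := by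
    intro x _
    exact (hGanal _ (Set.mem_univ _)).restrictScalars.comp
      (Complex.ofRealCLM.analyticAt x)
  have hEq : Set.EqOn (fun x : ℝ => G x) 0 Set.univ := by
    apply hanal.eqOn_zero_of_preconnected_of_eventuallyEq_zero isPreconnected_univ
      (Set.mem_univ x₀)
    have hmem : Set.Ioo (x₀ - ε) (x₀ + ε) ∈ nhds x₀ :=
      Ioo_mem_nhds (by linarith) (by linarith)
    filter_upwards [hmem] with x hx
    exact h x hx
  intro x
  exact hEq (Set.mem_univ x)

variable {B : Type*} [CommRing B]

noncomputable def conjZ : Polynomial B →+* Polynomial B :=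
  Polynomial.eval₂RingHom Polynomial.C (-Polynomial.X)

lemma conjZ_C (a : B) : conjZ (Polynomial.C a) = Polynomial.C a := by
  simp [conjZ]

lemma conjZ_X : conjZ (Polynomial.X : Polynomial B) = -Polynomial.X := by
  simp [conjZ]

lemma conjZ_conjZ : (conjZ : Polynomial B →+* Polynomial B).comp conjZ = RingHom.id _ := by
  apply Polynomial.ringHom_ext
  · intro a; simp [conjZ]
  · simp [conjZ]

lemma coeff_conjZ (γ : Polynomial B) (k : ℕ) :
    (conjZ γ).coeff k = (-1)^k * γ.coeff k := by
  induction γ using Polynomial.induction_on' with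
  | add p q hp hq => simp [map_add, hp, hq, mul_add]
  | monomial n a =>
    have : conjZ (Polynomial.monomial n a) = Polynomial.C a * (-1)^n * Polynomial.X^n := by
      rw [← Polynomial.C_mul_X_pow_eq_monomial]
      simp only [conjZ, coe_eval₂RingHom, Polynomial.eval₂_mul, Polynomial.eval₂_C,
        Polynomial.eval₂_pow, Polynomial.eval₂_X]
      rw [neg_pow]
      ring
    rw [this]
    have h2 : Polynomial.C a * (-1)^n * Polynomial.X ^ n
        = Polynomial.C (a * (-1)^n) * Polynomial.X ^ n := by
      simp [map_mul]
    rw [h2, Polynomial.coeff_C_mul, Polynomial.coeff_X_pow, Polynomial.coeff_monomial]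
    by_cases hnk : k = n
    · subst hnk; simp [mul_comm]
    · simp [hnk, Ne.symm hnk]

noncomputable def redZ (ρ : B) (γ : Polynomial B) : B :=
  ∑ k ∈ Finset.range (γ.natDegree + 1), γ.coeff (2*k) * ρ^k

lemma redZ_zero (ρ : B) : redZ ρ (0 : Polynomial B) = 0 := by simp [redZ]

lemma redZ_one (ρ : B) : redZ ρ (1 : Polynomial B) = 1 := by
  simp [redZ]

lemma sum_range_two_mul {M : Type*} [AddCommMonoid M] (n : ℕ) (f : ℕ → M) :
    ∑ k ∈ Finset.range (2*n), f k = ∑ j ∈ Finset.range n, (f (2*j) + f (2*j+1)) := by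
  induction n with
  | zero => simp
  | succ n ih =>
    rw [Finset.sum_range_succ, ← ih, mul_add, mul_one]
    rw [show 2*n+2 = (2*n+1)+1 by ring, Finset.sum_range_succ, Finset.sum_range_succ]
    rw [add_assoc]

lemma redZ_eval {C' : Type*} [CommRing C'] (e : B →+* C') (V : C') (ρ : B) (hV : V^2 = e ρ)
    (γ : Polynomial B) (heven : ∀ k, Odd k → γ.coeff k = 0) :
    e (redZ ρ γ) = Polynomial.eval₂ e V γ := by
  set N := γ.natDegree with hN
  rw [Polynomial.eval₂_eq_sum_range' e (n := 2*(N+1)) (by omega) V]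
  rw [sum_range_two_mul]
  have hodd : ∀ j, e (γ.coeff (2*j+1)) * V^(2*j+1) = 0 := by
    intro j
    rw [heven _ ⟨j, by ring⟩, map_zero, zero_mul]
  simp only [hodd, add_zero]
  rw [redZ, map_sum]
  apply Finset.sum_congr rfl
  intro j _
  rw [map_mul, map_pow, ← hV, pow_mul]

noncomputable def EV (m : ℕ) (v : Fin m → ℝ → ℂ) (x : ℝ) :
    MvPolynomial (Fin m) (Polynomial ℂ) →+* ℂ :=
  MvPolynomial.eval₂Hom (Polynomial.evalRingHom (x:ℂ)) (fun j => v j x)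

lemma EV_succ (m : ℕ) (v : Fin (m+1) → ℝ → ℂ) (x : ℝ) :
    EV (m+1) v x = (Polynomial.eval₂RingHom (EV m (fun j => v j.succ) x) (v 0 x)).comp
      (MvPolynomial.finSuccEquiv (Polynomial ℂ) m :
        MvPolynomial (Fin (m+1)) (Polynomial ℂ) →+* Polynomial (MvPolynomial (Fin m) (Polynomial ℂ))) := by
  apply MvPolynomial.ringHom_ext
  · intro a
    simp [EV, MvPolynomial.finSuccEquiv_apply]
  · intro i
    refine Fin.cases ?_ ?_ i
    · simp [EV, MvPolynomial.finSuccEquiv_X_zero]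
    · intro j
      simp [EV, MvPolynomial.finSuccEquiv_X_succ]

lemma sin_trans' (d : ℕ) (q : ℕ → Polynomial ℂ) (hq : q d = 1) (x₀ ε : ℝ) (hε : 0 < ε)
    (h : ∀ x ∈ Set.Ioo (x₀ - ε) (x₀ + ε),
      ∑ k ∈ Finset.range (d+1), (q k).eval (x:ℂ) * (Complex.sin x)^k = 0) : False :=
  sin_trans d q hq (sin_ext d q x₀ ε hε h)

lemma key (x₀ ε : ℝ) (hε : 0 < ε) : ∀ (m : ℕ) (v : Fin m → ℝ → ℂ) (ρ : Fin m → Polynomial ℂ),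
    (∀ (j : Fin m), ∀ x ∈ Set.Ioo (x₀-ε) (x₀+ε), (v j x)^2 = (ρ j).eval (x:ℂ)) →
    ∀ (P : Polynomial (MvPolynomial (Fin m) (Polynomial ℂ))), P.Monic →
    (∀ x ∈ Set.Ioo (x₀-ε) (x₀+ε), Polynomial.eval₂ (EV m v x) (Complex.sin x) P = 0) →
    False := by
  intro m
  induction m with
  | zero =>
    intro v ρ hρ P hmonic heval
    set EVpoly : MvPolynomial (Fin 0) (Polynomial ℂ) →+* Polynomial ℂ :=
      MvPolynomial.eval₂Hom (RingHom.id _) (fun i => i.elim0) with hEVpoly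
    have hcomp : ∀ x : ℝ, EV 0 v x = (Polynomial.evalRingHom (x:ℂ)).comp EVpoly := by
      intro x
      apply MvPolynomial.ringHom_ext
      · intro a; simp [EV, hEVpoly]
      · intro i; exact i.elim0
    apply sin_trans' P.natDegree (fun k => EVpoly (P.coeff k)) (by show EVpoly _ = 1; rw [hmonic.coeff_natDegree, map_one]) x₀ ε hε
    intro x hx
    have := heval x hx
    rw [Polynomial.eval₂_eq_sum_range] at this
    rw [← this]
    apply Finset.sum_congr rfl
    intro k _
    rw [hcomp x]
    simp
  | succ m ih =>
    intro v ρ hρ P hmonic heval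
    set B := MvPolynomial (Fin m) (Polynomial ℂ) with hB
    set fseR : MvPolynomial (Fin (m+1)) (Polynomial ℂ) →+* Polynomial B :=
      (MvPolynomial.finSuccEquiv (Polynomial ℂ) m :
        MvPolynomial (Fin (m+1)) (Polynomial ℂ) →+* Polynomial B) with hfseR
    set Pt := P.map fseR with hPt
    set Q := Pt * Pt.map conjZ with hQ
    have hPtmonic : Pt.Monic := hmonic.map fseR
    have hQmonic : Q.Monic := hPtmonic.mul (hPtmonic.map conjZ)
    have hQconj : Q.map conjZ = Q := by
      have h4 : (Polynomial.map conjZ (Polynomial.map conjZ Pt)) = Pt := by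
        rw [Polynomial.map_map, conjZ_conjZ, Polynomial.map_id]
      rw [hQ, Polynomial.map_mul, h4, mul_comm]
    have hQeven : ∀ k l, Odd l → (Q.coeff k).coeff l = 0 := by
      intro k l hl
      have h1 : conjZ (Q.coeff k) = Q.coeff k := by
        conv_rhs => rw [← hQconj]
        rw [Polynomial.coeff_map]
      have h2 := coeff_conjZ (Q.coeff k) l
      have hneg : ((-1 : B))^l = -1 := by
        rcases hl with ⟨t, rfl⟩
        rw [pow_succ, pow_mul]
        norm_num
      rw [h1, hneg] at h2
      have h3 : (2 : B) * (Q.coeff k).coeff l = 0 := by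
        rw [two_mul]
        nth_rewrite 1 [h2]
        ring
      have h2ne : (2:B) ≠ 0 := by norm_num
      exact (mul_eq_zero.1 h3).resolve_left h2ne
    set rr : B := MvPolynomial.C (ρ 0) with hrr
    set P' : Polynomial B :=
      ∑ k ∈ Finset.range (Q.natDegree + 1), Polynomial.C (redZ rr (Q.coeff k)) * Polynomial.X^k
      with hP'
    have hcoeff : ∀ k, P'.coeff k = redZ rr (Q.coeff k) := by
      intro k
      rw [hP', Polynomial.finset_sum_coeff]
      have hterm : ∀ j, (Polynomial.C (redZ rr (Q.coeff j)) * Polynomial.X^j).coeff k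
          = if j = k then redZ rr (Q.coeff j) else 0 := by
        intro j
        rw [Polynomial.coeff_C_mul, Polynomial.coeff_X_pow]
        by_cases hjk : k = j
        · subst hjk; simp
        · simp [hjk, Ne.symm hjk]
      simp only [hterm]
      rw [Finset.sum_ite_eq']
      by_cases hk : k ∈ Finset.range (Q.natDegree + 1)
      · simp [hk]
      · simp only [hk, if_false]
        have h5 : ¬ (k < Q.natDegree + 1) := by simpa [Finset.mem_range] using hk
        have : Q.coeff k = 0 := Polynomial.coeff_eq_zero_of_natDegree_lt (by omega)
        rw [this, redZ_zero]
    have hcoeffTop : P'.coeff Q.natDegree = 1 := by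
      rw [hcoeff, hQmonic.coeff_natDegree, redZ_one]
    have hdegle : P'.natDegree ≤ Q.natDegree := by
      apply Polynomial.natDegree_le_iff_coeff_eq_zero.2
      intro N hN
      rw [hcoeff, Polynomial.coeff_eq_zero_of_natDegree_lt hN, redZ_zero]
    have hdeg : P'.natDegree = Q.natDegree := by
      refine le_antisymm hdegle (Polynomial.le_natDegree_of_ne_zero ?_)
      rw [hcoeffTop]; exact one_ne_zero
    have hP'monic : P'.Monic := by
      rw [Polynomial.Monic, Polynomial.leadingCoeff, hdeg, hcoeffTop]
    refine ih (fun j => v j.succ) (fun j => ρ j.succ)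
      (fun j x hx => hρ j.succ x hx) P' hP'monic ?_
    intro x hx
    set e := EV m (fun j => v j.succ) x with he
    set V := v 0 x with hV
    set S := Complex.sin (x:ℂ) with hS
    set ee : Polynomial B →+* ℂ := Polynomial.eval₂RingHom e V with hee
    have hV2 : V^2 = e rr := by
      rw [hrr, hV]
      have : e (MvPolynomial.C (ρ 0)) = (ρ 0).eval (x:ℂ) := by
        simp [he, EV]
      rw [this]
      exact hρ 0 x hx
    have hred : ∀ k, e (P'.coeff k) = ee (Q.coeff k) := by
      intro k
      rw [hcoeff]
      rw [redZ_eval e V rr hV2 (Q.coeff k) (hQeven k)]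
      rfl
    have step1 : Polynomial.eval₂ e S P' = Polynomial.eval₂ ee S Q := by
      rw [Polynomial.eval₂_eq_sum_range' e (n := Q.natDegree + 1) (by omega) S]
      rw [Polynomial.eval₂_eq_sum_range' ee (n := Q.natDegree + 1) (by omega) S]
      exact Finset.sum_congr rfl (fun k _ => by rw [hred])
    have step2 : Polynomial.eval₂ ee S Pt = 0 := by
      have h6 : Polynomial.eval₂ ee S Pt = Polynomial.eval₂ (ee.comp fseR) S P := by
        rw [hPt, Polynomial.eval₂_map]
      rw [h6]
      have h7 : ee.comp fseR = EV (m+1) v x := by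
        rw [EV_succ m v x, hee, he, hfseR, hV]
      rw [h7]
      exact heval x hx
    rw [step1, hQ, Polynomial.eval₂_mul, step2, zero_mul]

lemma factor_eq (t u : ℝ) (ht : t ∈ ({-1, 0, 1} : Finset ℝ)) (hu1 : -1 ≤ u) (hu2 : u ≤ 1) :
    Complex.exp (Complex.I * t * (Real.arcsin u : ℂ)) =
      if t = 0 then 1 else ((Real.sqrt (1 - u^2) : ℂ) + Complex.I * t * u) := by
  have hcos : (Real.cos (Real.arcsin u) : ℂ) = (Real.sqrt (1 - u^2) : ℂ) := by
    rw [Real.cos_arcsin]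
  have hsin : (Real.sin (Real.arcsin u) : ℂ) = (u : ℂ) := by
    rw [Real.sin_arcsin hu1 hu2]
  simp only [Finset.mem_insert, Finset.mem_singleton] at ht
  rcases ht with rfl | rfl | rfl
  · norm_num
    rw [show -(Complex.I * (Real.arcsin u : ℂ)) = (-(Real.arcsin u : ℂ)) * Complex.I by ring]
    rw [Complex.exp_mul_I, Complex.cos_neg, Complex.sin_neg]
    rw [← Complex.ofReal_cos, ← Complex.ofReal_sin, hcos, hsin]
    ring
  · simp
  · norm_num
    rw [show Complex.I * (Real.arcsin u : ℂ) = (Real.arcsin u : ℂ) * Complex.I by ring]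
    rw [Complex.exp_mul_I, ← Complex.ofReal_cos, ← Complex.ofReal_sin, hcos, hsin]
    ring

end SinNotRepresentableHelpers

open Complex Real

/-- STATEMENT 19: the sine function cannot be represented, in any neighborhood of any
point, by an expectation value function with arcsine input encoding: there are no
`n ≥ 1`, coefficients `c_w ∈ ℂ` making `f(η) = Σ_{w ∈ {-1,0,1}^n} c_w e^{2πi w • η}`
real-valued, vectors `a, b ∈ ℝⁿ`, point `x₀ ∈ ℝ` and `ε > 0` with
`-1 ≤ aⱼx + bⱼ ≤ 1` on `(x₀ - ε, x₀ + ε)`, such that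
`sin x = f(arcsin(a₁x + b₁)/(2π), …, arcsin(aₙx + bₙ)/(2π))` on `(x₀ - ε, x₀ + ε)`. -/
theorem sin_not_representable_with_arcsin_encoding :
    ¬ ∃ (n : ℕ), 1 ≤ n ∧
      ∃ (f : (Fin n → ℝ) → ℝ) (c : (Fin n → ℝ) → ℂ),
        (∀ η : Fin n → ℝ, (f η : ℂ) =
          ∑ w ∈ Fintype.piFinset (fun _ : Fin n => ({-1, 0, 1} : Finset ℝ)),
            c w * Complex.exp (2 * Real.pi * Complex.I * (∑ j, w j * η j))) ∧
        ∃ (a b : Fin n → ℝ) (x₀ ε : ℝ), 0 < ε ∧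
          (∀ x ∈ Set.Ioo (x₀ - ε) (x₀ + ε), ∀ j,
            -1 ≤ a j * x + b j ∧ a j * x + b j ≤ 1) ∧
          ∀ x ∈ Set.Ioo (x₀ - ε) (x₀ + ε),
            Real.sin x = f (fun j => Real.arcsin (a j * x + b j) / (2 * Real.pi)) := by
  rintro ⟨n, -, f, c, hf, a, b, x₀, ε, hε, hbound, hrepr⟩
  classical
  set v : Fin n → ℝ → ℂ := fun j x => ((Real.sqrt (1 - (a j * x + b j)^2) : ℝ) : ℂ) with hv
  set ρ : Fin n → Polynomial ℂ := fun j =>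
    1 - (Polynomial.C ((a j : ℂ)) * Polynomial.X + Polynomial.C ((b j : ℂ)))^2 with hρdef
  have hρ : ∀ (j : Fin n), ∀ x ∈ Set.Ioo (x₀-ε) (x₀+ε), (v j x)^2 = (ρ j).eval (x:ℂ) := by
    intro j x hx
    obtain ⟨h1, h2⟩ := hbound x hx j
    have hnn : (0:ℝ) ≤ 1 - (a j * x + b j)^2 := by nlinarith
    rw [hv, hρdef]
    simp only [Polynomial.eval_sub, Polynomial.eval_one, Polynomial.eval_pow,
      Polynomial.eval_add, Polynomial.eval_mul, Polynomial.eval_C, Polynomial.eval_X]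
    rw [← Complex.ofReal_pow, Real.sq_sqrt hnn]
    push_cast
    ring
  set g : MvPolynomial (Fin n) (Polynomial ℂ) :=
    ∑ w ∈ Fintype.piFinset (fun _ : Fin n => ({-1, 0, 1} : Finset ℝ)),
      MvPolynomial.C (Polynomial.C (c w)) *
        ∏ j, (if w j = 0 then 1 else
          (MvPolynomial.X j + MvPolynomial.C (Polynomial.C (Complex.I * ((w j : ℝ) : ℂ)) *
            (Polynomial.C ((a j : ℂ)) * Polynomial.X + Polynomial.C ((b j : ℂ)))))) with hg
  set P : Polynomial (MvPolynomial (Fin n) (Polynomial ℂ)) :=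
    Polynomial.X - Polynomial.C g with hP
  have hmonic : P.Monic := Polynomial.monic_X_sub_C g
  apply key x₀ ε hε n v ρ hρ P hmonic
  intro x hx
  rw [hP, Polynomial.eval₂_sub, Polynomial.eval₂_X, Polynomial.eval₂_C]
  have hmain : (EV n v x) g = Complex.sin (x:ℂ) := by
    rw [← Complex.ofReal_sin, hrepr x hx, hf]
    rw [hg, map_sum]
    apply Finset.sum_congr rfl
    intro w hw
    rw [map_mul, map_prod]
    have hC : (EV n v x) (MvPolynomial.C (Polynomial.C (c w))) = c w := by
      simp [EV]
    rw [hC]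
    congr 1
    -- exponent manipulation
    have hexp : (2 * (Real.pi:ℂ) * Complex.I *
        (((∑ j, w j * (Real.arcsin (a j * x + b j) / (2 * Real.pi)) : ℝ)) : ℂ))
        = ∑ j, Complex.I * ((w j : ℝ):ℂ) * ((Real.arcsin (a j * x + b j) : ℝ) : ℂ) := by
      push_cast
      rw [Finset.mul_sum]
      apply Finset.sum_congr rfl
      intro j _
      have hπ : ((Real.pi:ℝ):ℂ) ≠ 0 := by
        exact_mod_cast Complex.ofReal_ne_zero.2 Real.pi_ne_zero
      field_simp
    rw [hexp, Complex.exp_sum]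
    apply Finset.prod_congr rfl
    intro j _
    have hwj : w j ∈ ({-1, 0, 1} : Finset ℝ) := by
      have := (Fintype.mem_piFinset).1 hw j
      exact this
    obtain ⟨h1, h2⟩ := hbound x hx j
    rw [factor_eq (w j) (a j * x + b j) hwj h1 h2]
    by_cases h0 : w j = 0
    · simp [h0, EV]
    · simp only [h0, if_false]
      rw [map_add]
      have hX : (EV n v x) (MvPolynomial.X j) = v j x := by simp [EV]
      have hC2 : (EV n v x) (MvPolynomial.C (Polynomial.C (Complex.I * ((w j : ℝ) : ℂ)) *
          (Polynomial.C ((a j : ℂ)) * Polynomial.X + Polynomial.C ((b j : ℂ)))))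
          = Complex.I * ((w j : ℝ):ℂ) * ((a j * x + b j : ℝ) : ℂ) := by
        simp only [EV, MvPolynomial.eval₂Hom_C, Polynomial.coe_evalRingHom,
          Polynomial.eval_mul, Polynomial.eval_add, Polynomial.eval_C, Polynomial.eval_X]
        push_cast
        ring
      rw [hX, hC2, hv]
  rw [hmain]
  ring
end
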